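/- arXiv:math/0406360 — 2 statements merged into one kernel-verified Lean document; each statement's English description precedes it below -/
import Mathlib

section
/- (Van der Corput lemma) Let $(u_n)_{n\geq 0}$ be a bounded sequence in a Hilbert space $H$. Then $\limsup_{N\to\infty} \left\| \frac{1}{N}\sum_{n=0}^{N-1} u_n \right\|^2 \leq \limsup_{M\to\infty} \frac{1}{M}\sum_{m=0}^{M-1} \limsup_{N\to\infty} \left| \frac{1}{N}\sum_{n=0}^{N-1} \langle u_{n+m}, u_n\rangle \right|.$ -/
set_option maxHeartbeats 1000000

open Filter Finset

section vdCHelpers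

lemma vdC_avg_abs_le {h : ℕ → ℝ} {B : ℝ} (hB : 0 ≤ B) (hh : ∀ n, |h n| ≤ B) (N : ℕ) :
    |(N : ℝ)⁻¹ * ∑ n ∈ range N, h n| ≤ B := by
  rcases Nat.eq_zero_or_pos N with rfl | hN
  · simpa using hB
  · have hNpos : (0:ℝ) < N := by exact_mod_cast hN
    rw [abs_mul, abs_inv, abs_of_nonneg hNpos.le]
    have h1 : |∑ n ∈ range N, h n| ≤ (N : ℝ) * B := by
      refine (Finset.abs_sum_le_sum_abs _ _).trans ?_
      calc ∑ n ∈ range N, |h n| ≤ ∑ _n ∈ range N, B :=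
            Finset.sum_le_sum fun n _ => hh n
        _ = (N : ℝ) * B := by simp [mul_comm]
    calc (N:ℝ)⁻¹ * |∑ n ∈ range N, h n| ≤ (N:ℝ)⁻¹ * ((N:ℝ) * B) := by
          exact mul_le_mul_of_nonneg_left h1 (by positivity)
      _ = B := by field_simp

lemma vdC_avg_norm_le {E : Type*} [SeminormedAddCommGroup E] [NormedSpace ℝ E]
    {h : ℕ → E} {B : ℝ} (hB : 0 ≤ B) (hh : ∀ n, ‖h n‖ ≤ B) (N : ℕ) :
    ‖(N : ℝ)⁻¹ • ∑ n ∈ range N, h n‖ ≤ B := by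
  rcases Nat.eq_zero_or_pos N with rfl | hN
  · simpa using hB
  · have hNpos : (0:ℝ) < N := by exact_mod_cast hN
    rw [norm_smul, norm_inv, Real.norm_natCast]
    have h1 : ‖∑ n ∈ range N, h n‖ ≤ (N : ℝ) * B := by
      refine (norm_sum_le _ _).trans ?_
      calc ∑ n ∈ range N, ‖h n‖ ≤ ∑ _n ∈ range N, B :=
            Finset.sum_le_sum fun n _ => hh n
        _ = (N : ℝ) * B := by simp [mul_comm]
    calc (N:ℝ)⁻¹ * ‖∑ n ∈ range N, h n‖ ≤ (N:ℝ)⁻¹ * ((N:ℝ) * B) := by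
          exact mul_le_mul_of_nonneg_left h1 (by positivity)
      _ = B := by field_simp

lemma vdC_shift_diff {E : Type*} [SeminormedAddCommGroup E] (h : ℕ → E) {B : ℝ}
    (hB : ∀ n, ‖h n‖ ≤ B) (j N : ℕ) :
    ‖∑ n ∈ range N, h (n + j) - ∑ n ∈ range N, h n‖ ≤ 2 * j * B := by
  have e1 : ∑ n ∈ range N, h (n + j) = ∑ n ∈ Finset.Ico j (N + j), h n := by
    rw [Finset.sum_Ico_eq_sum_range]
    simp [add_comm]
  have e2 : ∑ n ∈ Finset.Ico j (N + j), h n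
      = ∑ n ∈ range (N + j), h n - ∑ n ∈ range j, h n :=
    Finset.sum_Ico_eq_sub _ (Nat.le_add_left j N)
  have e3 : ∑ n ∈ Finset.Ico N (N + j), h n
      = ∑ n ∈ range (N + j), h n - ∑ n ∈ range N, h n :=
    Finset.sum_Ico_eq_sub _ (Nat.le_add_right N j)
  have e4 : ∑ n ∈ range N, h (n + j) - ∑ n ∈ range N, h n
      = ∑ n ∈ Finset.Ico N (N + j), h n - ∑ n ∈ range j, h n := by
    rw [e1, e2, e3]; abel
  rw [e4]
  have b1 : ‖∑ n ∈ Finset.Ico N (N + j), h n‖ ≤ j * B := by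
    refine (norm_sum_le _ _).trans ?_
    calc ∑ n ∈ Finset.Ico N (N+j), ‖h n‖ ≤ ∑ _n ∈ Finset.Ico N (N+j), B :=
          Finset.sum_le_sum fun n _ => hB n
      _ = j * B := by simp [Nat.add_sub_cancel_left]
  have b2 : ‖∑ n ∈ range j, h n‖ ≤ j * B := by
    refine (norm_sum_le _ _).trans ?_
    calc ∑ n ∈ range j, ‖h n‖ ≤ ∑ _n ∈ range j, B :=
          Finset.sum_le_sum fun n _ => hB n
      _ = j * B := by simp [mul_comm]
  calc ‖∑ n ∈ Finset.Ico N (N + j), h n - ∑ n ∈ range j, h n‖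
      ≤ ‖∑ n ∈ Finset.Ico N (N + j), h n‖ + ‖∑ n ∈ range j, h n‖ := norm_sub_le _ _
    _ ≤ j * B + j * B := add_le_add b1 b2
    _ = 2 * j * B := by ring

lemma vdC_limsup_sum_le {ι : Type*} (s : Finset ι) (f : ι → ℕ → ℝ) (B : ℝ)
    (h0 : ∀ i ∈ s, ∀ N, 0 ≤ f i N) (hB : ∀ i ∈ s, ∀ N, f i N ≤ B) :
    limsup (fun N => ∑ i ∈ s, f i N) atTop ≤ ∑ i ∈ s, limsup (fun N => f i N) atTop := by
  classical
  induction s using Finset.cons_induction with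
  | empty => simp
  | cons a s ha ih =>
      simp only [Finset.sum_cons]
      have key : limsup (fun N => f a N + ∑ i ∈ s, f i N) atTop
          ≤ limsup (fun N => f a N) atTop + limsup (fun N => ∑ i ∈ s, f i N) atTop := by
        refine limsup_add_le ?_ ?_ ?_ ?_
        · exact isBoundedUnder_of ⟨0, fun N => h0 a (Finset.mem_cons_self a s) N⟩
        · exact isBoundedUnder_of ⟨B, fun N => hB a (Finset.mem_cons_self a s) N⟩
        · exact isCoboundedUnder_le_of_le atTop fun N =>
            Finset.sum_nonneg fun i hi => h0 i (Finset.mem_cons_of_mem hi) N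
        · exact isBoundedUnder_of ⟨s.card * B, fun N => by
            calc ∑ i ∈ s, f i N ≤ ∑ _i ∈ s, B :=
                  Finset.sum_le_sum fun i hi => hB i (Finset.mem_cons_of_mem hi) N
              _ = s.card * B := by simp [mul_comm]⟩
      refine key.trans (add_le_add le_rfl (ih ?_ ?_))
      · exact fun i hi N => h0 i (Finset.mem_cons_of_mem hi) N
      · exact fun i hi N => hB i (Finset.mem_cons_of_mem hi) N

lemma vdC_limsup_const_mul_le {f : ℕ → ℝ} {c B : ℝ} (hc : 0 ≤ c)
    (h0 : ∀ N, 0 ≤ f N) (hB : ∀ N, f N ≤ B) :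
    limsup (fun N => c * f N) atTop ≤ c * limsup f atTop := by
  rcases eq_or_lt_of_le hc with rfl | hc
  · simp
  · have hcob : IsCoboundedUnder (· ≤ ·) atTop (fun N => c * f N) :=
      isCoboundedUnder_le_of_le atTop fun N => mul_nonneg hc.le (h0 N)
    have hbd : IsBoundedUnder (· ≤ ·) atTop (fun N : ℕ => c * f N) :=
      isBoundedUnder_of ⟨c * B, fun N => mul_le_mul_of_nonneg_left (hB N) hc.le⟩
    rw [limsup_le_iff hcob hbd]
    intro y hy
    have h1 : limsup f atTop < y / c := by
      rw [lt_div_iff₀ hc]; linarith [mul_comm c (limsup f atTop)]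
    have h2 := eventually_lt_of_limsup_lt h1 (isBoundedUnder_of ⟨B, hB⟩)
    filter_upwards [h2] with N hN
    calc c * f N < c * (y / c) := by exact mul_lt_mul_of_pos_left hN hc
      _ = y := by field_simp

lemma vdC_gauss (M : ℕ) : ∑ k ∈ range M, ((k : ℝ) + 1) = M * (M + 1) / 2 := by
  induction M with
  | zero => simp
  | succ n ih => rw [Finset.sum_range_succ, ih]; push_cast; ring

end vdCHelpers

/-- **Van der Corput lemma.** For a bounded sequence `u` in a Hilbert space,
`limsup_N ‖(1/N) ∑_{n<N} u n‖² ≤ limsup_M (1/M) ∑_{m<M} limsup_N |(1/N) ∑_{n<N} ⟪u (n+m), u n⟫|`. -/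
theorem van_der_corput {H : Type*} [NormedAddCommGroup H] [InnerProductSpace ℝ H]
    (u : ℕ → H) (hbd : ∃ C, ∀ n, ‖u n‖ ≤ C) :
    limsup (fun N : ℕ => ‖(N : ℝ)⁻¹ • ∑ n ∈ range N, u n‖ ^ 2) atTop ≤
      limsup (fun M : ℕ => (M : ℝ)⁻¹ * ∑ m ∈ range M,
        limsup (fun N : ℕ =>
          |(N : ℝ)⁻¹ * ∑ n ∈ range N, (inner ℝ (u (n + m)) (u n) : ℝ)|) atTop) atTop := by
  classical
  obtain ⟨C₀, hC₀⟩ := hbd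
  set C : ℝ := max C₀ 0 with hCdef
  have hC : ∀ n, ‖u n‖ ≤ C := fun n => (hC₀ n).trans (le_max_left _ _)
  have hCnn : (0:ℝ) ≤ C := le_max_right _ _
  set g : ℕ → ℕ → ℝ :=
    fun d N => |(N : ℝ)⁻¹ * ∑ n ∈ range N, (inner ℝ (u (n + d)) (u n) : ℝ)| with hgdef
  set γ : ℕ → ℝ := fun d => limsup (g d) atTop with hγdef
  set S : ℕ → ℝ := fun M => ∑ m ∈ range M, γ m with hSdef
  set A : ℕ → ℝ := fun M => (M : ℝ)⁻¹ * S M with hAdef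
  set LSeq : ℕ → ℝ := fun N => ‖(N : ℝ)⁻¹ • ∑ n ∈ range N, u n‖ ^ 2 with hLdef
  show limsup LSeq atTop ≤ limsup A atTop
  set L : ℝ := limsup LSeq atTop with hLdef'
  set R : ℝ := limsup A atTop with hRdef
  -- basic bounds
  have hinner_abs : ∀ d n, |(inner ℝ (u (n + d)) (u n) : ℝ)| ≤ C ^ 2 := by
    intro d n
    refine (abs_real_inner_le_norm _ _).trans ?_
    rw [sq]
    exact mul_le_mul (hC _) (hC _) (norm_nonneg _) hCnn
  have hg0 : ∀ d N, 0 ≤ g d N := fun d N => abs_nonneg _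
  have hgC : ∀ d N, g d N ≤ C ^ 2 := fun d N =>
    vdC_avg_abs_le (by positivity) (fun n => hinner_abs d n) N
  have hγ0 : ∀ d, 0 ≤ γ d := fun d =>
    le_limsup_of_frequently_le (Frequently.of_forall fun N => hg0 d N)
      (isBoundedUnder_of ⟨C ^ 2, hgC d⟩)
  have hγC : ∀ d, γ d ≤ C ^ 2 := fun d =>
    limsup_le_of_le (isCoboundedUnder_le_of_le atTop (hg0 d))
      (Eventually.of_forall (hgC d))
  have hS0 : ∀ M, 0 ≤ S M := fun M => Finset.sum_nonneg fun m _ => hγ0 m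
  have hSC : ∀ M : ℕ, S M ≤ M * C ^ 2 := by
    intro M
    calc S M ≤ ∑ _m ∈ range M, C ^ 2 := Finset.sum_le_sum fun m _ => hγC m
      _ = M * C ^ 2 := by simp [mul_comm]
  have hA0 : ∀ M, 0 ≤ A M := fun M => mul_nonneg (by positivity) (hS0 M)
  have hAC : ∀ M, A M ≤ C ^ 2 := by
    intro M
    rcases Nat.eq_zero_or_pos M with rfl | hM
    · simp [hAdef, hSdef]; positivity
    · have hMpos : (0:ℝ) < M := by exact_mod_cast hM
      calc A M ≤ (M:ℝ)⁻¹ * ((M:ℝ) * C ^ 2) :=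
            mul_le_mul_of_nonneg_left (hSC M) (by positivity)
        _ = C ^ 2 := by field_simp
  have hR0 : (0:ℝ) ≤ R :=
    le_limsup_of_frequently_le (Frequently.of_forall hA0) (isBoundedUnder_of ⟨C ^ 2, hAC⟩)
  have hL0ub : ∀ N, 0 ≤ LSeq N := fun N => by rw [hLdef]; positivity
  -- the key estimate for a fixed window length M
  have key : ∀ M : ℕ, 1 ≤ M →
      L ≤ (M:ℝ)⁻¹ ^ 2 * (2 * ∑ k ∈ range M, S (k + 1)) := by
    intro M hM
    have hMpos : (0:ℝ) < M := by exact_mod_cast hM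
    -- shifted averages
    have base : ∀ j d : ℕ, j ≤ M → ∀ N : ℕ,
        (N:ℝ)⁻¹ * ∑ n ∈ range N, (inner ℝ (u (n + j + d)) (u (n + j)) : ℝ)
          ≤ g d N + 2 * M * C ^ 2 * (N:ℝ)⁻¹ := by
      intro j d hj N
      set h : ℕ → ℝ := fun n => (inner ℝ (u (n + d)) (u n) : ℝ) with hhdef
      have hhB : ∀ n, ‖h n‖ ≤ C ^ 2 := fun n => by
        rw [Real.norm_eq_abs]; exact hinner_abs d n
      have hdiff := vdC_shift_diff h hhB j N
      have hNnn : (0:ℝ) ≤ (N:ℝ)⁻¹ := by positivity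
      have h1 : ∑ n ∈ range N, h (n + j) ≤ ∑ n ∈ range N, h n + 2 * j * C ^ 2 := by
        have h1' := (abs_le.1 (by simpa [Real.norm_eq_abs] using hdiff)).2
        linarith
      have h2 : ∑ n ∈ range N, h n ≤ |∑ n ∈ range N, h n| := le_abs_self _
      have h3 : g d N = (N:ℝ)⁻¹ * |∑ n ∈ range N, h n| := by
        rw [hgdef]
        simp only []
        rw [abs_mul, abs_inv, Nat.abs_cast]
      have hjM : (j:ℝ) ≤ M := by exact_mod_cast hj
      calc (N:ℝ)⁻¹ * ∑ n ∈ range N, (inner ℝ (u (n + j + d)) (u (n + j)) : ℝ)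
          = (N:ℝ)⁻¹ * ∑ n ∈ range N, h (n + j) := rfl
        _ ≤ (N:ℝ)⁻¹ * (|∑ n ∈ range N, h n| + 2 * j * C ^ 2) := by
            apply mul_le_mul_of_nonneg_left _ hNnn
            linarith
        _ = (N:ℝ)⁻¹ * |∑ n ∈ range N, h n| + 2 * j * C ^ 2 * (N:ℝ)⁻¹ := by ring
        _ ≤ g d N + 2 * M * C ^ 2 * (N:ℝ)⁻¹ := by
            rw [h3]
            have : 2 * (j:ℝ) * C ^ 2 * (N:ℝ)⁻¹ ≤ 2 * M * C ^ 2 * (N:ℝ)⁻¹ := by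
              apply mul_le_mul_of_nonneg_right _ hNnn
              nlinarith [sq_nonneg C]
            linarith
    -- per-pair bound
    have pair : ∀ m ∈ range M, ∀ m' ∈ range M, ∀ N : ℕ,
        (N:ℝ)⁻¹ * ∑ n ∈ range N, (inner ℝ (u (n + m)) (u (n + m')) : ℝ)
          ≤ g (Nat.dist m m') N + 2 * M * C ^ 2 * (N:ℝ)⁻¹ := by
      intro m hm m' hm' N
      rcases le_total m' m with hle | hle
      · have hdist : Nat.dist m m' = m - m' := Nat.dist_eq_sub_of_le_right hle
        have hre : ∀ n, (inner ℝ (u (n + m)) (u (n + m')) : ℝ)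
            = (inner ℝ (u (n + m' + (m - m'))) (u (n + m')) : ℝ) := by
          intro n
          have hidx : n + m' + (m - m') = n + m := by omega
          rw [hidx]
        rw [hdist]
        calc (N:ℝ)⁻¹ * ∑ n ∈ range N, (inner ℝ (u (n + m)) (u (n + m')) : ℝ)
            = (N:ℝ)⁻¹ * ∑ n ∈ range N, (inner ℝ (u (n + m' + (m - m'))) (u (n + m')) : ℝ) := by
              rw [Finset.sum_congr rfl fun n _ => hre n]
          _ ≤ _ := base m' (m - m') (mem_range.1 hm').le N
      · have hdist : Nat.dist m m' = m' - m := Nat.dist_eq_sub_of_le hle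
        have hre : ∀ n, (inner ℝ (u (n + m)) (u (n + m')) : ℝ)
            = (inner ℝ (u (n + m + (m' - m))) (u (n + m)) : ℝ) := by
          intro n
          have hidx : n + m + (m' - m) = n + m' := by omega
          rw [hidx, real_inner_comm]
        rw [hdist]
        calc (N:ℝ)⁻¹ * ∑ n ∈ range N, (inner ℝ (u (n + m)) (u (n + m')) : ℝ)
            = (N:ℝ)⁻¹ * ∑ n ∈ range N, (inner ℝ (u (n + m + (m' - m))) (u (n + m)) : ℝ) := by
              rw [Finset.sum_congr rfl fun n _ => hre n]
          _ ≤ _ := base m (m' - m) (mem_range.1 hm).le N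
    set Fp : ℕ × ℕ → ℕ → ℝ := fun p N => (M:ℝ)⁻¹ ^ 2 * g (Nat.dist p.1 p.2) N with hFpdef
    set eM : ℕ → ℝ := fun N =>
      2*M*C*(N:ℝ)⁻¹ * (2*C + 2*M*C*(N:ℝ)⁻¹) + 2*M*C^2*(N:ℝ)⁻¹ with heMdef
    -- pointwise estimate
    have ptwise : ∀ N : ℕ, 1 ≤ N →
        LSeq N ≤ (∑ p ∈ range M ×ˢ range M, Fp p N) + eM N := by
      intro N hN
      have hNpos : (0:ℝ) < N := by exact_mod_cast hN
      set y : ℕ → H := fun n => (M:ℝ)⁻¹ • ∑ m ∈ range M, u (n + m) with hydef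
      have hyC : ∀ n, ‖y n‖ ≤ C := fun n => vdC_avg_norm_le hCnn (fun m => hC (n + m)) M
      set v : H := (N:ℝ)⁻¹ • ∑ n ∈ range N, u n with hvdef
      set w : H := (N:ℝ)⁻¹ • ∑ n ∈ range N, y n with hwdef
      have hwC : ‖w‖ ≤ C := vdC_avg_norm_le hCnn hyC N
      have hsum_y : ∑ n ∈ range N, y n
          = (M:ℝ)⁻¹ • ∑ m ∈ range M, ∑ n ∈ range N, u (n + m) := by
        rw [hydef, ← Finset.smul_sum, Finset.sum_comm]
      set D : H := ∑ m ∈ range M, (∑ n ∈ range N, u n - ∑ n ∈ range N, u (n + m)) with hDdef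
      have claim : ∑ n ∈ range N, u n - ∑ n ∈ range N, y n = (M:ℝ)⁻¹ • D := by
        rw [hDdef, Finset.sum_sub_distrib, Finset.sum_const, Finset.card_range, smul_sub,
          hsum_y, ← Nat.cast_smul_eq_nsmul ℝ, smul_smul,
          inv_mul_cancel₀ (ne_of_gt hMpos), one_smul]
      have hdiffnorm : ∀ m ∈ range M,
          ‖∑ n ∈ range N, u n - ∑ n ∈ range N, u (n + m)‖ ≤ 2*M*C := by
        intro m hm
        rw [norm_sub_rev]
        refine (vdC_shift_diff u hC m N).trans ?_
        have hmM : (m:ℝ) ≤ M := by exact_mod_cast (mem_range.1 hm).le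
        nlinarith [hCnn]
      have hDnorm : ‖D‖ ≤ M * (2*M*C) := by
        rw [hDdef]
        refine (norm_sum_le _ _).trans ?_
        calc ∑ m ∈ range M, ‖∑ n ∈ range N, u n - ∑ n ∈ range N, u (n + m)‖
            ≤ ∑ _m ∈ range M, 2*M*C := Finset.sum_le_sum hdiffnorm
          _ = M * (2*M*C) := by simp [mul_comm]
      have hvw : ‖v - w‖ ≤ 2*M*C*(N:ℝ)⁻¹ := by
        have hvm : v - w = (N:ℝ)⁻¹ • ((M:ℝ)⁻¹ • D) := by
          rw [hvdef, hwdef, ← smul_sub, claim]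
        rw [hvm, norm_smul, norm_smul, norm_inv, norm_inv, Real.norm_natCast,
          Real.norm_natCast]
        calc (N:ℝ)⁻¹ * ((M:ℝ)⁻¹ * ‖D‖) ≤ (N:ℝ)⁻¹ * ((M:ℝ)⁻¹ * (M * (2*M*C))) := by
              gcongr
          _ = 2*M*C*(N:ℝ)⁻¹ := by field_simp
      have hvnorm : ‖v‖ ≤ ‖w‖ + 2*M*C*(N:ℝ)⁻¹ := by
        have h5 : w + (v - w) = v := by abel
        calc ‖v‖ = ‖w + (v - w)‖ := by rw [h5]
          _ ≤ ‖w‖ + ‖v - w‖ := norm_add_le _ _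
          _ ≤ ‖w‖ + 2*M*C*(N:ℝ)⁻¹ := by linarith
      have hdelta : (0:ℝ) ≤ 2*M*C*(N:ℝ)⁻¹ := by
        have : (0:ℝ) ≤ 2*(M:ℝ) := by positivity
        have h6 : (0:ℝ) ≤ 2*(M:ℝ)*C := mul_nonneg this hCnn
        have h7 : (0:ℝ) ≤ (N:ℝ)⁻¹ := by positivity
        exact mul_nonneg h6 h7
      have hv2 : ‖v‖^2 ≤ ‖w‖^2 + 2*M*C*(N:ℝ)⁻¹ * (2*C + 2*M*C*(N:ℝ)⁻¹) := by
        nlinarith [norm_nonneg v, norm_nonneg w, hvnorm, hwC, hdelta]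
      have hw2 : ‖w‖^2 ≤ (N:ℝ)⁻¹ * ∑ n ∈ range N, ‖y n‖^2 := by
        have h1 : ‖w‖ ≤ (N:ℝ)⁻¹ * ∑ n ∈ range N, ‖y n‖ := by
          rw [hwdef, norm_smul, norm_inv, Real.norm_natCast]
          exact mul_le_mul_of_nonneg_left (norm_sum_le _ _) (by positivity)
        have h2 : (∑ n ∈ range N, ‖y n‖)^2 ≤ (N:ℝ) * ∑ n ∈ range N, ‖y n‖^2 := by
          have h2' := sq_sum_le_card_mul_sum_sq (s := range N) (f := fun n => ‖y n‖)
          simpa using h2'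
        have h3 : ‖w‖^2 ≤ ((N:ℝ)⁻¹ * ∑ n ∈ range N, ‖y n‖)^2 :=
          pow_le_pow_left₀ (norm_nonneg _) h1 2
        refine h3.trans ?_
        rw [mul_pow]
        calc ((N:ℝ)⁻¹)^2 * (∑ n ∈ range N, ‖y n‖)^2
            ≤ ((N:ℝ)⁻¹)^2 * ((N:ℝ) * ∑ n ∈ range N, ‖y n‖^2) := by
              apply mul_le_mul_of_nonneg_left h2 (by positivity)
          _ = (N:ℝ)⁻¹ * ∑ n ∈ range N, ‖y n‖^2 := by
              field_simp
      have hy2 : ∀ n, ‖y n‖^2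
          = (M:ℝ)⁻¹^2 * ∑ m ∈ range M, ∑ m' ∈ range M,
              (inner ℝ (u (n + m)) (u (n + m')) : ℝ) := by
        intro n
        rw [← real_inner_self_eq_norm_sq]
        simp only [hydef, real_inner_smul_left, real_inner_smul_right, sum_inner, inner_sum,
          Finset.mul_sum]
        rw [Finset.sum_comm]
        refine Finset.sum_congr rfl fun m _ => Finset.sum_congr rfl fun m' _ => by ring
      have hrearr : (N:ℝ)⁻¹ * ∑ n ∈ range N, ‖y n‖^2
          = ∑ p ∈ range M ×ˢ range M, (M:ℝ)⁻¹^2 *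
              ((N:ℝ)⁻¹ * ∑ n ∈ range N, (inner ℝ (u (n + p.1)) (u (n + p.2)) : ℝ)) := by
        have h0 : ∑ n ∈ range N, ‖y n‖^2
            = ∑ n ∈ range N, ((M:ℝ)⁻¹^2 * ∑ m ∈ range M, ∑ m' ∈ range M,
                (inner ℝ (u (n + m)) (u (n + m')) : ℝ)) :=
          Finset.sum_congr rfl fun n _ => hy2 n
        rw [h0, Finset.sum_product]
        simp only [Finset.mul_sum]
        rw [Finset.sum_comm]
        refine Finset.sum_congr rfl fun m _ => ?_
        rw [Finset.sum_comm]
        refine Finset.sum_congr rfl fun m' _ => Finset.sum_congr rfl fun n _ => by ring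
      have pair_sum : ∑ p ∈ range M ×ˢ range M, (M:ℝ)⁻¹^2 *
            ((N:ℝ)⁻¹ * ∑ n ∈ range N, (inner ℝ (u (n + p.1)) (u (n + p.2)) : ℝ))
          ≤ (∑ p ∈ range M ×ˢ range M, Fp p N) + 2*M*C^2*(N:ℝ)⁻¹ := by
        have hstep : ∀ p ∈ range M ×ˢ range M, (M:ℝ)⁻¹^2 *
              ((N:ℝ)⁻¹ * ∑ n ∈ range N, (inner ℝ (u (n + p.1)) (u (n + p.2)) : ℝ))
            ≤ Fp p N + (M:ℝ)⁻¹^2 * (2*M*C^2*(N:ℝ)⁻¹) := by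
          intro p hp
          rw [Finset.mem_product] at hp
          have hp1 := pair p.1 hp.1 p.2 hp.2 N
          rw [hFpdef]
          simp only []
          calc (M:ℝ)⁻¹^2 * ((N:ℝ)⁻¹ * ∑ n ∈ range N, (inner ℝ (u (n + p.1)) (u (n + p.2)) : ℝ))
              ≤ (M:ℝ)⁻¹^2 * (g (Nat.dist p.1 p.2) N + 2 * M * C ^ 2 * (N:ℝ)⁻¹) := by
                apply mul_le_mul_of_nonneg_left hp1 (by positivity)
            _ = (M:ℝ)⁻¹ ^ 2 * g (Nat.dist p.1 p.2) N + (M:ℝ)⁻¹^2 * (2*M*C^2*(N:ℝ)⁻¹) := by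
                ring
        calc ∑ p ∈ range M ×ˢ range M, (M:ℝ)⁻¹^2 *
              ((N:ℝ)⁻¹ * ∑ n ∈ range N, (inner ℝ (u (n + p.1)) (u (n + p.2)) : ℝ))
            ≤ ∑ p ∈ range M ×ˢ range M, (Fp p N + (M:ℝ)⁻¹^2 * (2*M*C^2*(N:ℝ)⁻¹)) :=
              Finset.sum_le_sum hstep
          _ = (∑ p ∈ range M ×ˢ range M, Fp p N)
              + (M*M : ℝ) * ((M:ℝ)⁻¹^2 * (2*M*C^2*(N:ℝ)⁻¹)) := by
              rw [Finset.sum_add_distrib, Finset.sum_const, Finset.card_product,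
                Finset.card_range, nsmul_eq_mul]
              push_cast
              ring
          _ = (∑ p ∈ range M ×ˢ range M, Fp p N) + 2*M*C^2*(N:ℝ)⁻¹ := by
              congr 1
              field_simp
      have hLN : LSeq N = ‖v‖^2 := rfl
      rw [hLN, heMdef]
      simp only []
      have := hw2.trans_eq hrearr
      linarith [hv2, pair_sum]
    -- pass to the limsup
    have hMC2 : (0:ℝ) ≤ 2*(M:ℝ)*C := mul_nonneg (by positivity) hCnn
    have heM0 : ∀ N, 0 ≤ eM N := by
      intro N
      rw [heMdef]
      simp only []
      have h7 : (0:ℝ) ≤ (N:ℝ)⁻¹ := by positivity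
      have h8 : (0:ℝ) ≤ 2*(M:ℝ)*C*(N:ℝ)⁻¹ := mul_nonneg hMC2 h7
      have h9 : (0:ℝ) ≤ 2*C := by linarith
      have h10 : (0:ℝ) ≤ 2*(M:ℝ)*C^2*(N:ℝ)⁻¹ := by
        have : (0:ℝ) ≤ 2*(M:ℝ)*C^2 := by positivity
        exact mul_nonneg this h7
      nlinarith
    have heMtend : Tendsto eM atTop (nhds 0) := by
      have h0 := tendsto_inv_atTop_nhds_zero_nat (𝕜 := ℝ)
      have ht : Tendsto eM atTop
          (nhds (2*M*C*0 * (2*C + 2*M*C*0) + 2*M*C^2*0)) := by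
        rw [heMdef]
        exact ((tendsto_const_nhds.mul h0).mul
          (tendsto_const_nhds.add (tendsto_const_nhds.mul h0))).add
          (tendsto_const_nhds.mul h0)
      simpa using ht
    have hFp0 : ∀ p ∈ range M ×ˢ range M, ∀ N, 0 ≤ Fp p N := fun p _ N =>
      mul_nonneg (by positivity) (hg0 _ N)
    have hFpB : ∀ p ∈ range M ×ˢ range M, ∀ N, Fp p N ≤ (M:ℝ)⁻¹^2 * C^2 := fun p _ N =>
      mul_le_mul_of_nonneg_left (hgC _ N) (by positivity)
    have hFsum0 : ∀ N, 0 ≤ ∑ p ∈ range M ×ˢ range M, Fp p N := fun N =>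
      Finset.sum_nonneg fun p hp => hFp0 p hp N
    have hFsumB : ∀ N, ∑ p ∈ range M ×ˢ range M, Fp p N
        ≤ ((range M ×ˢ range M).card : ℝ) * ((M:ℝ)⁻¹^2 * C^2) := by
      intro N
      calc ∑ p ∈ range M ×ˢ range M, Fp p N
          ≤ ∑ _p ∈ range M ×ˢ range M, (M:ℝ)⁻¹^2 * C^2 :=
            Finset.sum_le_sum fun p hp => hFpB p hp N
        _ = ((range M ×ˢ range M).card : ℝ) * ((M:ℝ)⁻¹^2 * C^2) := by
            rw [Finset.sum_const, nsmul_eq_mul]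
    have step_b : L ≤ limsup (fun N => ∑ p ∈ range M ×ˢ range M, Fp p N) atTop := by
      have hmono : L ≤ limsup (fun N => (∑ p ∈ range M ×ˢ range M, Fp p N) + eM N) atTop := by
        rw [hLdef']
        refine limsup_le_limsup ?_ ?_ ?_
        · filter_upwards [eventually_ge_atTop 1] with N hN using ptwise N hN
        · exact isCoboundedUnder_le_of_le atTop hL0ub
        · refine isBoundedUnder_of ⟨((range M ×ˢ range M).card : ℝ) * ((M:ℝ)⁻¹^2 * C^2)
            + (2*M*C * (2*C + 2*M*C) + 2*M*C^2), fun N => ?_⟩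
          have hinv1 : (N:ℝ)⁻¹ ≤ 1 := Nat.cast_inv_le_one N
          have h7 : (0:ℝ) ≤ (N:ℝ)⁻¹ := by positivity
          have heMB : eM N ≤ 2*M*C * (2*C + 2*M*C) + 2*M*C^2 := by
            rw [heMdef]
            simp only []
            have e1 : 2*(M:ℝ)*C*(N:ℝ)⁻¹ ≤ 2*M*C := by nlinarith
            have e2 : (0:ℝ) ≤ 2*(M:ℝ)*C*(N:ℝ)⁻¹ := mul_nonneg hMC2 h7
            have e3 : 2*C + 2*(M:ℝ)*C*(N:ℝ)⁻¹ ≤ 2*C + 2*M*C := by linarith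
            have e4 : (0:ℝ) ≤ 2*C + 2*(M:ℝ)*C*(N:ℝ)⁻¹ := by linarith
            have e5 : 2*(M:ℝ)*C^2*(N:ℝ)⁻¹ ≤ 2*M*C^2 := by nlinarith [sq_nonneg C]
            nlinarith
          exact add_le_add (hFsumB N) heMB
      have hadd : limsup (fun N => (∑ p ∈ range M ×ˢ range M, Fp p N) + eM N) atTop
          ≤ limsup (fun N => ∑ p ∈ range M ×ˢ range M, Fp p N) atTop + limsup eM atTop := by
        exact limsup_add_le (isBoundedUnder_of ⟨0, hFsum0⟩)
          (isBoundedUnder_of ⟨_, hFsumB⟩)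
          (isCoboundedUnder_le_of_le atTop heM0)
          heMtend.isBoundedUnder_le
      have hzero : limsup eM atTop = 0 := heMtend.limsup_eq
      calc L ≤ _ := hmono
        _ ≤ _ + limsup eM atTop := hadd
        _ = _ := by rw [hzero, add_zero]
    have step_c : limsup (fun N => ∑ p ∈ range M ×ˢ range M, Fp p N) atTop
        ≤ ∑ p ∈ range M ×ˢ range M, (M:ℝ)⁻¹^2 * γ (Nat.dist p.1 p.2) := by
      refine (vdC_limsup_sum_le _ Fp ((M:ℝ)⁻¹^2 * C^2) hFp0 hFpB).trans ?_
      refine Finset.sum_le_sum fun p hp => ?_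
      have := vdC_limsup_const_mul_le (f := g (Nat.dist p.1 p.2)) (c := (M:ℝ)⁻¹^2)
        (B := C^2) (by positivity) (hg0 _) (hgC _)
      rw [hγdef]
      exact this
    -- counting
    have count : ∑ p ∈ range M ×ˢ range M, (M:ℝ)⁻¹^2 * γ (Nat.dist p.1 p.2)
        ≤ (M:ℝ)⁻¹ ^ 2 * (2 * ∑ k ∈ range M, S (k + 1)) := by
      rw [Finset.sum_product]
      have hfact : ∑ m ∈ range M, ∑ m' ∈ range M, (M:ℝ)⁻¹^2 * γ (Nat.dist m m')
          = (M:ℝ)⁻¹^2 * ∑ m ∈ range M, ∑ m' ∈ range M, γ (Nat.dist m m') := by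
        rw [Finset.mul_sum]
        exact Finset.sum_congr rfl fun m _ => by rw [Finset.mul_sum]
      rw [hfact]
      apply mul_le_mul_of_nonneg_left _ (by positivity)
      -- core counting
      have hterm : ∀ m ∈ range M, ∀ m' ∈ range M, γ (Nat.dist m m')
          ≤ (if m' ≤ m then γ (m - m') else 0) + (if m ≤ m' then γ (m' - m) else 0) := by
        intro m _ m' _
        rcases le_total m' m with h | h
        · rw [Nat.dist_eq_sub_of_le_right h, if_pos h]
          refine le_add_of_nonneg_right ?_
          split_ifs
          · exact hγ0 _
          · exact le_rfl
        · rw [Nat.dist_eq_sub_of_le h, if_pos h]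
          refine le_add_of_nonneg_left ?_
          split_ifs
          · exact hγ0 _
          · exact le_rfl
      have hsum1 : ∀ m ∈ range M,
          ∑ m' ∈ range M, (if m' ≤ m then γ (m - m') else 0) = S (m + 1) := by
        intro m hm
        have hsub : range (m + 1) ⊆ range M := by
          apply Finset.range_subset_range.2
          exact mem_range.1 hm
        rw [← Finset.sum_subset hsub (fun x hx hnx => by
          rw [if_neg]
          simp only [mem_range] at hx hnx
          omega)]
        rw [Finset.sum_congr rfl fun m' hm' => if_pos (Nat.lt_succ_iff.1 (mem_range.1 hm'))]
        rw [hSdef]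
        simp only []
        have hrefl := Finset.sum_range_reflect γ (m + 1)
        simpa using hrefl
      calc ∑ m ∈ range M, ∑ m' ∈ range M, γ (Nat.dist m m')
          ≤ ∑ m ∈ range M, ∑ m' ∈ range M,
              ((if m' ≤ m then γ (m - m') else 0) + (if m ≤ m' then γ (m' - m) else 0)) :=
            Finset.sum_le_sum fun m hm => Finset.sum_le_sum fun m' hm' => hterm m hm m' hm'
        _ = (∑ m ∈ range M, ∑ m' ∈ range M, (if m' ≤ m then γ (m - m') else 0))
            + ∑ m ∈ range M, ∑ m' ∈ range M, (if m ≤ m' then γ (m' - m) else 0) := by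
            rw [← Finset.sum_add_distrib]
            exact Finset.sum_congr rfl fun m _ => by rw [← Finset.sum_add_distrib]
        _ = (∑ m ∈ range M, S (m + 1)) + ∑ m' ∈ range M, S (m' + 1) := by
            congr 1
            · exact Finset.sum_congr rfl hsum1
            · rw [Finset.sum_comm]
              exact Finset.sum_congr rfl fun m' hm' => hsum1 m' hm'
        _ = 2 * ∑ k ∈ range M, S (k + 1) := by ring
    exact step_b.trans (step_c.trans count)
  -- conclusion via ε-argument
  refine le_of_forall_pos_le_add fun ε hε => ?_
  have hbA : IsBoundedUnder (· ≤ ·) atTop A := isBoundedUnder_of ⟨C ^ 2, hAC⟩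
  have hlt : R < R + ε / 2 := by linarith
  obtain ⟨K₀, hK₀⟩ := eventually_atTop.1 (eventually_lt_of_limsup_lt hlt hbA)
  set K := max K₀ 1 with hKdef
  have hK1 : 1 ≤ K := le_max_right _ _
  have hKbound : ∀ k, K ≤ k → A k < R + ε / 2 := fun k hk =>
    hK₀ k ((le_max_left _ _).trans hk)
  have hSle : ∀ k : ℕ, 1 ≤ k → S k ≤ k * (R + ε / 2) + (K:ℝ)^2 * C^2 := by
    intro k hk
    have hkpos : (0:ℝ) < k := by exact_mod_cast hk
    have hKC : (0:ℝ) ≤ (K:ℝ)^2 * C^2 := by positivity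
    rcases le_or_gt K k with h | h
    · have hA := (hKbound k h).le
      have hSA : S k = k * A k := by
        rw [hAdef]
        simp only []
        field_simp
      rw [hSA]
      have : (k:ℝ) * A k ≤ k * (R + ε / 2) := mul_le_mul_of_nonneg_left hA hkpos.le
      linarith
    · have h1 : S k ≤ k * C^2 := hSC k
      have h2 : (k:ℝ) ≤ K := by exact_mod_cast h.le
      have h3 : (1:ℝ) ≤ K := by exact_mod_cast hK1
      have h4 : (0:ℝ) ≤ R + ε / 2 := by linarith
      have h5 : (0:ℝ) ≤ (k:ℝ) * (R + ε / 2) := mul_nonneg hkpos.le h4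
      have h6 : (k:ℝ) * C^2 ≤ (K:ℝ)^2 * C^2 := by
        have hK0 : (0:ℝ) ≤ K := by linarith
        have hkK : (k:ℝ) ≤ (K:ℝ)^2 := by nlinarith
        exact mul_le_mul_of_nonneg_right hkK (sq_nonneg C)
      linarith
  have hwhole : ∀ M : ℕ, 1 ≤ M →
      L ≤ (R + ε / 2) * (1 + (M:ℝ)⁻¹) + 2 * (K:ℝ)^2 * C^2 * (M:ℝ)⁻¹ := by
    intro M hM
    have hMpos : (0:ℝ) < M := by exact_mod_cast hM
    have h1 := key M hM
    have h4 : (0:ℝ) ≤ R + ε / 2 := by linarith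
    have h2 : ∑ k ∈ range M, S (k + 1)
        ≤ (R + ε / 2) * (M * (M + 1) / 2) + M * ((K:ℝ)^2 * C^2) := by
      calc ∑ k ∈ range M, S (k + 1)
          ≤ ∑ k ∈ range M, (((k:ℝ) + 1) * (R + ε / 2) + (K:ℝ)^2 * C^2) := by
            refine Finset.sum_le_sum fun k _ => ?_
            have hs := hSle (k + 1) (by omega)
            push_cast at hs ⊢
            linarith
        _ = (∑ k ∈ range M, ((k:ℝ) + 1)) * (R + ε / 2) + M * ((K:ℝ)^2 * C^2) := by
            rw [Finset.sum_add_distrib, ← Finset.sum_mul, Finset.sum_const,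
              Finset.card_range, nsmul_eq_mul]
        _ = (R + ε / 2) * (M * (M + 1) / 2) + M * ((K:ℝ)^2 * C^2) := by
            rw [vdC_gauss]; ring
    have h3 : (M:ℝ)⁻¹^2 * (2 * ∑ k ∈ range M, S (k + 1))
        ≤ (M:ℝ)⁻¹^2 * (2 * ((R + ε / 2) * (M * (M + 1) / 2) + M * ((K:ℝ)^2 * C^2))) := by
      apply mul_le_mul_of_nonneg_left _ (by positivity)
      linarith
    have h5 : (M:ℝ)⁻¹^2 * (2 * ((R + ε / 2) * (M * (M + 1) / 2) + M * ((K:ℝ)^2 * C^2)))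
        = (R + ε / 2) * (1 + (M:ℝ)⁻¹) + 2 * (K:ℝ)^2 * C^2 * (M:ℝ)⁻¹ := by
      field_simp
    linarith
  have htend : Tendsto (fun M : ℕ => (R + ε / 2) * (1 + (M:ℝ)⁻¹)
      + 2 * (K:ℝ)^2 * C^2 * (M:ℝ)⁻¹) atTop
      (nhds ((R + ε / 2) * (1 + 0) + 2 * (K:ℝ)^2 * C^2 * 0)) := by
    exact (tendsto_const_nhds.mul
      (tendsto_const_nhds.add tendsto_inv_atTop_nhds_zero_nat)).add
      (tendsto_const_nhds.mul tendsto_inv_atTop_nhds_zero_nat)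
  have hev : ∀ᶠ M : ℕ in atTop,
      (R + ε / 2) * (1 + (M:ℝ)⁻¹) + 2 * (K:ℝ)^2 * C^2 * (M:ℝ)⁻¹ < R + ε := by
    refine htend.eventually (gt_mem_nhds ?_)
    norm_num
    linarith
  obtain ⟨M, hM1, hM2⟩ := ((eventually_ge_atTop 1).and hev).exists
  exact (hwhole M hM1).trans hM2.le
end

section
/- Let $(X,\mu,T)$ be an ergodic measure preserving system. For every integer $k\geq 1$ the function $f\mapsto\nnorm{f}_k$ defined by $\nnorm{f}_k^{2^k}=\int_{X^{2^k}}\prod_{j} f(x_j)\,d\mu^{[k]}$ is well-defined (the integral is nonnegative) and is a seminorm on $L^\infty(\mu)$; moreover $\nnorm{f}_1 = |\int f\,d\mu|$. -/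
open MeasureTheory Filter Finset

/-- The spaces `X^{[k]} = X^{2^k}`, realized as iterated squares. -/
def HKBox (X : Type*) : ℕ → Type _
  | 0 => X
  | (k+1) => HKBox X k × HKBox X k

def HKBox.instMS (X : Type*) [m : MeasurableSpace X] : ∀ k, MeasurableSpace (HKBox X k)
  | 0 => m
  | (k+1) => @Prod.instMeasurableSpace _ _ (HKBox.instMS X k) (HKBox.instMS X k)

instance (X : Type*) [MeasurableSpace X] (k : ℕ) : MeasurableSpace (HKBox X k) :=
  HKBox.instMS X k

/-- The diagonal transformation `T^{[k]} = T × ⋯ × T` on `X^{[k]}`. -/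
def HKBox.map {X : Type*} (T : X → X) : ∀ k, HKBox X k → HKBox X k
  | 0 => T
  | (k+1) => fun p => (HKBox.map T k p.1, HKBox.map T k p.2)

/-- The σ-algebra of invariant sets of a transformation. -/
def invSigma {α : Type*} [m : MeasurableSpace α] (f : α → α) : MeasurableSpace α where
  MeasurableSet' s := MeasurableSet s ∧ f ⁻¹' s = s
  measurableSet_empty := ⟨MeasurableSet.empty, rfl⟩
  measurableSet_compl := fun s hs => ⟨hs.1.compl, by rw [Set.preimage_compl, hs.2]⟩
  measurableSet_iUnion := fun s hs => ⟨MeasurableSet.iUnion fun i => (hs i).1, by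
    rw [Set.preimage_iUnion]; exact Set.iUnion_congr fun i => (hs i).2⟩

/-- The product of `f` over all `2^k` coordinates of `X^{[k]}`. -/
def HKBox.prodFun {X : Type*} (f : X → ℝ) : ∀ k, HKBox X k → ℝ
  | 0 => f
  | (k+1) => fun p => HKBox.prodFun f k p.1 * HKBox.prodFun f k p.2

/-- `IsHKSeq μ T ν` asserts that `ν k` is the Host–Kra box measure `μ^{[k]}` of the
system `(X, μ, T)`: `ν 0 = μ` and `ν (k+1)` is the relatively independent square of
`ν k` over the σ-algebra of `T^{[k]}`-invariant sets. -/
def IsHKSeq {X : Type*} [MeasurableSpace X] (μ : Measure X) (T : X → X)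
    (ν : ∀ k, Measure (HKBox X k)) : Prop :=
  ν 0 = μ ∧ ∀ k, (∀ F' F'' : HKBox X k → ℝ, Measurable F' → Measurable F'' →
    (∃ C, ∀ x, |F' x| ≤ C) → (∃ C, ∀ x, |F'' x| ≤ C) →
    ∫ p, F' p.1 * F'' p.2 ∂(ν (k+1)) =
      ∫ x, ((ν k)[F' | invSigma (HKBox.map T k)]) x *
        ((ν k)[F'' | invSigma (HKBox.map T k)]) x ∂(ν k))

/-- The `k`-th Host–Kra seminorm of `f`, computed from a sequence `ν` of box measures:
`⦀f⦀_k = (∫ ∏_{ε} f(x_ε) dν k)^{1/2^k}`. -/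
noncomputable def HKseminorm {X : Type*} [MeasurableSpace X]
    (ν : ∀ k, Measure (HKBox X k)) (k : ℕ) (f : X → ℝ) : ℝ :=
  (∫ x, HKBox.prodFun f k x ∂(ν k)) ^ (((2 : ℝ) ^ k)⁻¹)

set_option maxHeartbeats 1000000
set_option synthInstance.maxHeartbeats 200000

open scoped Topology

namespace HKP

variable {Y : Type*} [MeasurableSpace Y]

theorem invSigma_le (S : Y → Y) : invSigma S ≤ ‹MeasurableSpace Y› := fun _ hs => hs.1

theorem sf_trim (ν : Measure Y) [IsFiniteMeasure ν] (S : Y → Y) :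
    SigmaFinite (ν.trim (invSigma_le S)) := by
  have : IsFiniteMeasure (ν.trim (invSigma_le S)) := isFiniteMeasure_trim _
  infer_instance

variable {ν : Measure Y} {S : Y → Y}

theorem comp_ae_eq (hS : MeasurePreserving S ν ν) {g g' : Y → ℝ} (h : g =ᵐ[ν] g') :
    g ∘ S =ᵐ[ν] g' ∘ S :=
  ae_eq_comp hS.measurable.aemeasurable (by rwa [hS.map_eq])

theorem memLp2 [IsFiniteMeasure ν] {f : Y → ℝ} (hm : Measurable f) {C : ℝ}
    (hC : ∀ x, |f x| ≤ C) : MemLp f 2 ν :=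
  MemLp.of_bound hm.aestronglyMeasurable C (Eventually.of_forall fun x => by
    simpa [Real.norm_eq_abs] using hC x)

theorem integrable_of_bound [IsFiniteMeasure ν] {f : Y → ℝ} (hm : Measurable f) {C : ℝ}
    (hC : ∀ x, |f x| ≤ C) : Integrable f ν :=
  (memLp2 hm hC).integrable one_le_two

/-- Cauchy-Schwarz for integrals. -/
theorem integral_mul_le {f g : Y → ℝ} (hf : MemLp f 2 ν) (hg : MemLp g 2 ν) :
    ∫ x, f x * g x ∂ν ≤ Real.sqrt (∫ x, f x * f x ∂ν) * Real.sqrt (∫ x, g x * g x ∂ν) := by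
  have key : ∀ (u v : Y → ℝ) (hu : MemLp u 2 ν) (hv : MemLp v 2 ν),
      inner (𝕜 := ℝ) (hu.toLp u) (hv.toLp v) = ∫ x, u x * v x ∂ν := by
    intro u v hu hv
    rw [L2.inner_def]
    refine integral_congr_ae ?_
    filter_upwards [hu.coeFn_toLp, hv.coeFn_toLp] with x h1 h2
    simp [h1, h2, RCLike.inner_apply, starRingEnd_apply, mul_comm]
  have h1 := key f g hf hg
  have h2 := key f f hf hf
  have h3 := key g g hg hg
  have hcs := abs_real_inner_le_norm (hf.toLp f) (hg.toLp g)
  have hn1 : Real.sqrt (∫ x, f x * f x ∂ν) = ‖hf.toLp f‖ := by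
    rw [← h2, real_inner_self_eq_norm_mul_norm]
    exact Real.sqrt_mul_self (norm_nonneg _)
  have hn2 : Real.sqrt (∫ x, g x * g x ∂ν) = ‖hg.toLp g‖ := by
    rw [← h3, real_inner_self_eq_norm_mul_norm]
    exact Real.sqrt_mul_self (norm_nonneg _)
  rw [← h1, hn1, hn2]
  exact (le_abs_self _).trans hcs

/-- The conditional expectation of a bounded function is a.e. bounded and in L2. -/
theorem memLp2_condexp [IsProbabilityMeasure ν] (S : Y → Y) {f : Y → ℝ} (hm : Measurable f)
    {C : ℝ} (hC : ∀ x, |f x| ≤ C) : MemLp (ν[f|invSigma S]) 2 ν := by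
  haveI := sf_trim ν S
  have hb : ∀ᵐ x ∂ν, |f x| ≤ ((⟨max C 0, le_max_right _ _⟩ : NNReal) : ℝ) :=
    Eventually.of_forall fun x => (hC x).trans (le_max_left _ _)
  have h2 := ae_bdd_condExp_of_ae_bdd (m := invSigma S) hb
  refine MemLp.of_bound ?_ _ (h2.mono fun x hx => by rw [Real.norm_eq_abs]; exact hx)
  exact (stronglyMeasurable_condExp.mono (invSigma_le S)).aestronglyMeasurable

/-- Integrals of (φ ∘ S^[n]) over invariant sets. -/
theorem setIntegral_comp_iterate (hS : MeasurePreserving S ν ν) {φ : Y → ℝ}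
    (hφ : AEStronglyMeasurable φ ν) {A : Set Y} (hA : MeasurableSet A)
    (hinv : S ⁻¹' A = A) (n : ℕ) :
    ∫ x in A, φ (S^[n] x) ∂ν = ∫ x in A, φ x ∂ν := by
  have hAn : S^[n] ⁻¹' A = A := by
    induction n with
    | zero => rfl
    | succ n ih => rw [Function.iterate_succ, Set.preimage_comp, ih, hinv]
  have hSn : MeasurePreserving S^[n] ν ν := hS.iterate n
  rw [← integral_indicator hA, ← integral_indicator hA]
  have hind : ∀ x, A.indicator φ (S^[n] x) = A.indicator (fun y => φ (S^[n] y)) x := by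
    intro x
    by_cases hx : x ∈ A
    · have hx' : S^[n] x ∈ A := by rw [← hAn] at hx; exact hx
      simp [Set.indicator_of_mem, hx, hx']
    · have hx' : S^[n] x ∉ A := fun h => hx (by rw [← hAn]; exact h)
      simp [Set.indicator_of_notMem, hx, hx']
  calc ∫ x, A.indicator (fun y => φ (S^[n] y)) x ∂ν
      = ∫ x, A.indicator φ (S^[n] x) ∂ν := by
        exact integral_congr_ae (Eventually.of_forall fun x => (hind x).symm)
    _ = ∫ x, A.indicator φ x ∂ν := by
        have h3 := integral_map (μ := ν) hSn.measurable.aemeasurable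
          (f := A.indicator φ) (by rw [hSn.map_eq]; exact hφ.indicator hA)
        rw [hSn.map_eq] at h3
        exact h3.symm

/-- A function which is a.e. invariant has an invariant-σ-algebra-measurable version. -/
theorem aesm_invSigma (hS : MeasurePreserving S ν ν) {g : Y → ℝ}
    (hg : AEStronglyMeasurable g ν) (hinv : g ∘ S =ᵐ[ν] g) :
    AEStronglyMeasurable[invSigma S] g ν := by
  set gm := hg.mk g with hgm_def
  have hgm : StronglyMeasurable gm := hg.stronglyMeasurable_mk
  have hgmS : gm ∘ S =ᵐ[ν] gm := by
    have h1 : g ∘ S =ᵐ[ν] gm ∘ S := comp_ae_eq hS hg.ae_eq_mk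
    exact h1.symm.trans (hinv.trans hg.ae_eq_mk)
  have hSn : ∀ n : ℕ, (fun x => gm (S^[n] x)) =ᵐ[ν] gm := by
    intro n
    induction n with
    | zero => rfl
    | succ n ih =>
      have h1 : (fun x => gm (S^[n] (S x))) =ᵐ[ν] fun x => gm (S x) :=
        comp_ae_eq hS ih
      have h2 : (fun x => gm (S^[n+1] x)) = fun x => gm (S^[n] (S x)) := by
        funext x; rw [Function.iterate_succ_apply]
      rw [h2]
      exact h1.trans hgmS
  set G : Y → ℝ := fun x => Filter.limsup (fun n => gm (S^[n] x)) atTop with hG_def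
  have hGmeas : Measurable G :=
    Measurable.limsup fun n => hgm.measurable.comp (hS.measurable.iterate n)
  have hGS : G ∘ S = G := by
    funext x
    have : (fun n => gm (S^[n] (S x))) = fun n => gm (S^[n+1] x) := by
      funext n; rw [Function.iterate_succ_apply]
    show Filter.limsup (fun n => gm (S^[n] (S x))) atTop = _
    rw [this]
    exact Filter.limsup_nat_add (fun n => gm (S^[n] x)) 1
  have hGinv : Measurable[invSigma S] G := by
    intro t ht
    refine ⟨hGmeas ht, ?_⟩
    rw [← Set.preimage_comp, hGS]
  refine ⟨G, hGinv.stronglyMeasurable, ?_⟩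
  have hall : ∀ᵐ x ∂ν, ∀ n, gm (S^[n] x) = gm x := ae_all_iff.2 fun n => hSn n
  filter_upwards [hall, hg.ae_eq_mk] with x hx hx2
  rw [hx2, hG_def]
  simp only
  have : (fun n => gm (S^[n] x)) = fun _ => gm x := funext hx
  rw [this, Filter.limsup_const]

/-- Conditional expectation on the invariant σ-algebra is invariant under composition. -/
theorem condexp_comp_ae [IsProbabilityMeasure ν] (hS : MeasurePreserving S ν ν)
    {φ : Y → ℝ} (hm : Measurable φ) {C : ℝ} (hC : ∀ x, |φ x| ≤ C) :
    ν[fun x => φ (S x)|invSigma S] =ᵐ[ν] ν[φ|invSigma S] := by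
  haveI := sf_trim ν S
  refine (ae_eq_condExp_of_forall_setIntegral_eq (invSigma_le S)
    (integrable_of_bound (hm.comp hS.measurable) (fun x => hC (S x)))
    (fun s _ _ => integrable_condExp.integrableOn) (fun A hA _ => ?_)
    stronglyMeasurable_condExp.aestronglyMeasurable).symm
  rw [setIntegral_condExp (invSigma_le S) (integrable_of_bound hm hC) hA]
  exact (setIntegral_comp_iterate hS hm.aestronglyMeasurable hA.1 hA.2 1).symm

/-- For an ergodic transformation, the conditional expectation w.r.t. the invariant σ-algebra
is a.e. the integral. -/
theorem ergodic_condexp [IsProbabilityMeasure ν] (hS : Ergodic S ν)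
    {φ : Y → ℝ} (hm : Measurable φ) {C : ℝ} (hC : ∀ x, |φ x| ≤ C) :
    ν[φ|invSigma S] =ᵐ[ν] fun _ => ∫ x, φ x ∂ν := by
  haveI := sf_trim ν S
  have hint : Integrable φ ν := integrable_of_bound hm hC
  refine (ae_eq_condExp_of_forall_setIntegral_eq (invSigma_le S) hint
    (fun s _ _ => (integrable_const _).integrableOn) (fun A hA _ => ?_)
    stronglyMeasurable_const.aestronglyMeasurable).symm
  rcases hS.toPreErgodic.measure_self_or_compl_eq_zero hA.1 hA.2 with h0 | h1
  · rw [Measure.restrict_eq_zero.2 h0]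
    simp
  · have hA1 : ν A = 1 := (prob_compl_eq_zero_iff hA.1).1 h1
    have h2 : ∫ x in A, φ x ∂ν = ∫ x, φ x ∂ν := by
      have := integral_add_compl hA.1 hint
      rw [Measure.restrict_eq_zero.2 h1] at this
      simpa using this
    rw [h2, setIntegral_const, measureReal_def, hA1]
    simp

/-- The Koopman operator on L². -/
noncomputable def koopman (hS : MeasurePreserving S ν ν) : Lp ℝ 2 ν →L[ℝ] Lp ℝ 2 ν :=
  LinearMap.mkContinuous
    { toFun := fun g => Lp.compMeasurePreserving S hS g
      map_add' := fun g h => map_add _ g h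
      map_smul' := fun c g => by
        apply Lp.ext
        have h1 := Lp.coeFn_compMeasurePreserving (c • g) hS
        have h2 := Lp.coeFn_compMeasurePreserving g hS
        have h3 : ⇑(c • g) =ᵐ[ν] c • ⇑g := Lp.coeFn_smul c g
        have h4 : ⇑(c • g) ∘ S =ᵐ[ν] (c • ⇑g) ∘ S := comp_ae_eq hS h3
        refine h1.trans (h4.trans ?_) |>.trans (Lp.coeFn_smul c _).symm
        filter_upwards [h2] with x hx
        simp only [RingHom.id_apply, Pi.smul_apply, Function.comp_apply, smul_eq_mul]
        rw [hx]
        rfl }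
    1 (fun g => by
      rw [one_mul]
      exact le_of_eq (Lp.norm_compMeasurePreserving g hS))

theorem koopman_apply (hS : MeasurePreserving S ν ν) (g : Lp ℝ 2 ν) :
    koopman hS g = Lp.compMeasurePreserving S hS g := rfl

theorem koopman_norm_le (hS : MeasurePreserving S ν ν) : ‖koopman hS‖ ≤ 1 :=
  LinearMap.mkContinuous_norm_le _ zero_le_one _

theorem vn_exists {E : Type*} [NormedAddCommGroup E] [InnerProductSpace ℝ E] [CompleteSpace E]
    (U : E →L[ℝ] E) (hU : ‖U‖ ≤ 1) (F : E) :
    ∃ G : E, U G = G ∧ inner (𝕜 := ℝ) (F - G) G = 0 ∧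
      Tendsto (fun N => birkhoffAverage ℝ U _root_.id N F) atTop (𝓝 G) := by
  refine ⟨_, ?_, ?_, U.tendsto_birkhoffAverage_orthogonalProjection hU F⟩
  · simpa using LinearMap.mem_eqLocus.mp (SetLike.coe_mem
      (Submodule.orthogonalProjectionOnto (LinearMap.eqLocus (U : E →ₗ[ℝ] E) ((1 : E →L[ℝ] E) : E →ₗ[ℝ] E)) F))
  · exact Submodule.starProjection_inner_eq_zero F _ (SetLike.coe_mem _)

/-- The von Neumann mean ergodic theorem, in the form we need. -/
theorem vn_tendsto [IsProbabilityMeasure ν] (hS : MeasurePreserving S ν ν)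
    {Ξ : Y → ℝ} (hm : Measurable Ξ) {C : ℝ} (hC : ∀ x, |Ξ x| ≤ C) :
    Tendsto (fun N : ℕ => (N : ℝ)⁻¹ * ∑ n ∈ Finset.range N, ∫ x, Ξ (S^[n] x) * Ξ x ∂ν)
      atTop (𝓝 (∫ x, (ν[Ξ|invSigma S]) x * (ν[Ξ|invSigma S]) x ∂ν)) := by
  haveI := sf_trim ν S
  have hΞ2 : MemLp Ξ 2 ν := memLp2 hm hC
  set F : Lp ℝ 2 ν := hΞ2.toLp Ξ with hF_def
  set U := koopman hS with hU_def
  obtain ⟨G, hGfix, hortho, htend⟩ := vn_exists U (koopman_norm_le hS) F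
  -- coeFn of iterates
  have hiter : ∀ n : ℕ, (⇑(U^[n] F) : Y → ℝ) =ᵐ[ν] fun x => Ξ (S^[n] x) := by
    intro n
    induction n with
    | zero => simpa using hΞ2.coeFn_toLp
    | succ n ih =>
      have h1 : U^[n+1] F = U (U^[n] F) := Function.iterate_succ_apply' _ _ _
      rw [h1]
      have h2 : ⇑(U (U^[n] F)) =ᵐ[ν] ⇑(U^[n] F) ∘ S :=
        Lp.coeFn_compMeasurePreserving _ hS
      have h3 : ⇑(U^[n] F) ∘ S =ᵐ[ν] (fun x => Ξ (S^[n] x)) ∘ S := comp_ae_eq hS ih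
      refine h2.trans (h3.trans (Eventually.of_forall fun x => ?_))
      show Ξ (S^[n] (S x)) = Ξ (S^[n+1] x)
      rw [Function.iterate_succ_apply]
  -- inner products with F
  have hinner : ∀ n : ℕ, (inner (𝕜 := ℝ) (U^[n] F) F) = ∫ x, Ξ (S^[n] x) * Ξ x ∂ν := by
    intro n
    rw [L2.inner_def]
    refine integral_congr_ae ?_
    filter_upwards [hiter n, hΞ2.coeFn_toLp] with x h1 h2
    simp [h1, h2, RCLike.inner_apply, starRingEnd_apply]
    rw [hF_def, h2, mul_comm]
  have havg : ∀ N : ℕ, (inner (𝕜 := ℝ) (birkhoffAverage ℝ U _root_.id N F) F)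
      = (N : ℝ)⁻¹ * ∑ n ∈ Finset.range N, ∫ x, Ξ (S^[n] x) * Ξ x ∂ν := by
    intro N
    rw [birkhoffAverage, birkhoffSum, real_inner_smul_left, sum_inner]
    congr 1
    exact Finset.sum_congr rfl fun n _ => hinner n
  -- G is a.e. the conditional expectation
  have hGS : ⇑G ∘ S =ᵐ[ν] ⇑G := by
    have h2 : ⇑(U G) =ᵐ[ν] ⇑G ∘ S := Lp.coeFn_compMeasurePreserving G hS
    rw [hGfix] at h2
    exact h2.symm
  have hGE : (⇑G : Y → ℝ) =ᵐ[ν] ν[Ξ|invSigma S] := by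
    refine ae_eq_condExp_of_forall_setIntegral_eq (invSigma_le S)
      (integrable_of_bound hm hC)
      (fun s _ _ => ((Lp.memLp G).integrable one_le_two).integrableOn)
      (fun A hA _ => ?_) (aesm_invSigma hS (Lp.aestronglyMeasurable G) hGS)
    -- ∫ x in A, G = ∫ x in A, Ξ
    set χ : Lp ℝ 2 ν := indicatorConstLp 2 hA.1 (measure_ne_top ν A) (1 : ℝ) with hχ_def
    have hip : ∀ h : Lp ℝ 2 ν, (inner (𝕜 := ℝ) χ h) = ∫ x in A, h x ∂ν := by
      intro h
      rw [hχ_def, L2.inner_indicatorConstLp_eq_setIntegral_inner]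
      simp [RCLike.inner_apply, starRingEnd_apply]
    have ht2 : Tendsto (fun N => (inner (𝕜 := ℝ) χ (birkhoffAverage ℝ U _root_.id N F)))
        atTop (𝓝 (inner (𝕜 := ℝ) χ G)) := tendsto_const_nhds.inner htend
    have ht3 : ∀ N : ℕ, 1 ≤ N →
        (inner (𝕜 := ℝ) χ (birkhoffAverage ℝ U _root_.id N F)) = ∫ x in A, Ξ x ∂ν := by
      intro N hN
      rw [birkhoffAverage, birkhoffSum, real_inner_smul_right, inner_sum]
      have : ∀ n ∈ Finset.range N, (inner (𝕜 := ℝ) χ (_root_.id (U^[n] F)))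
          = ∫ x in A, Ξ x ∂ν := by
        intro n _
        rw [id_eq, hip]
        have h5 : ∫ x in A, (U^[n] F) x ∂ν = ∫ x in A, Ξ (S^[n] x) ∂ν :=
          integral_congr_ae (ae_restrict_of_ae (hiter n))
        rw [h5]
        exact setIntegral_comp_iterate hS hm.aestronglyMeasurable hA.1 hA.2 n
      rw [Finset.sum_congr rfl this, Finset.sum_const, Finset.card_range, nsmul_eq_mul]
      rw [← mul_assoc, inv_mul_cancel₀ (by exact_mod_cast Nat.one_le_iff_ne_zero.1 hN), one_mul]
    have ht4 : Tendsto (fun _ : ℕ => ∫ x in A, Ξ x ∂ν) atTop (𝓝 (∫ x in A, Ξ x ∂ν)) :=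
      tendsto_const_nhds
    have := tendsto_nhds_unique (ht2.congr' (by
      filter_upwards [eventually_ge_atTop 1] with N hN
      exact ht3 N hN)) ht4
    rw [← hip G, this]
  -- identify the limit
  have hlim : (inner (𝕜 := ℝ) G F) = ∫ x, (ν[Ξ|invSigma S]) x * (ν[Ξ|invSigma S]) x ∂ν := by
    have h6 : (inner (𝕜 := ℝ) F G) = (inner (𝕜 := ℝ) G G) := by
      have := hortho
      rw [inner_sub_left, sub_eq_zero] at this
      exact this
    rw [show (inner (𝕜 := ℝ) G F) = inner (𝕜 := ℝ) F G from real_inner_comm _ _, h6,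
      L2.inner_def]
    refine integral_congr_ae ?_
    filter_upwards [hGE] with x hx
    simp [hx, RCLike.inner_apply, starRingEnd_apply, sq]
  have hfinal := (htend.inner (tendsto_const_nhds (x := F))).congr
    (fun N => (havg N))
  rw [hlim] at hfinal
  exact hfinal

/-- Cesàro Cauchy-Schwarz limit comparison. -/
theorem cesaro_le {t a b : ℕ → ℝ} {L A B : ℝ}
    (h : ∀ n, t n ≤ Real.sqrt (a n) * Real.sqrt (b n))
    (ha0 : ∀ n, 0 ≤ a n) (hb0 : ∀ n, 0 ≤ b n)
    (ht : Tendsto (fun N : ℕ => (N : ℝ)⁻¹ * ∑ n ∈ Finset.range N, t n) atTop (𝓝 L))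
    (hA : Tendsto (fun N : ℕ => (N : ℝ)⁻¹ * ∑ n ∈ Finset.range N, a n) atTop (𝓝 A))
    (hB : Tendsto (fun N : ℕ => (N : ℝ)⁻¹ * ∑ n ∈ Finset.range N, b n) atTop (𝓝 B)) :
    L ≤ Real.sqrt A * Real.sqrt B := by
  have hsq : Tendsto (fun N : ℕ => Real.sqrt ((N : ℝ)⁻¹ * ∑ n ∈ Finset.range N, a n)
      * Real.sqrt ((N : ℝ)⁻¹ * ∑ n ∈ Finset.range N, b n)) atTop
      (𝓝 (Real.sqrt A * Real.sqrt B)) :=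
    ((Real.continuous_sqrt.continuousAt.tendsto.comp hA).mul
      (Real.continuous_sqrt.continuousAt.tendsto.comp hB))
  refine le_of_tendsto_of_tendsto ht hsq ?_
  filter_upwards [eventually_ge_atTop 1] with N hN
  have hNpos : (0 : ℝ) < (N : ℝ) := by exact_mod_cast hN
  have hNinv : (0 : ℝ) ≤ (N : ℝ)⁻¹ := by positivity
  have step1 : ∑ n ∈ Finset.range N, t n ≤
      ∑ n ∈ Finset.range N, Real.sqrt (a n) * Real.sqrt (b n) :=
    Finset.sum_le_sum fun n _ => h n
  have step2 : ∑ n ∈ Finset.range N, Real.sqrt (a n) * Real.sqrt (b n) ≤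
      Real.sqrt (∑ n ∈ Finset.range N, a n) * Real.sqrt (∑ n ∈ Finset.range N, b n) := by
    have hcs := Finset.sum_mul_sq_le_sq_mul_sq (Finset.range N)
      (fun n => Real.sqrt (a n)) (fun n => Real.sqrt (b n))
    have h1 : ∀ n, Real.sqrt (a n) ^ 2 = a n := fun n => Real.sq_sqrt (ha0 n)
    have h2 : ∀ n, Real.sqrt (b n) ^ 2 = b n := fun n => Real.sq_sqrt (hb0 n)
    simp only [h1, h2] at hcs
    have hnn : 0 ≤ ∑ n ∈ Finset.range N, Real.sqrt (a n) * Real.sqrt (b n) :=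
      Finset.sum_nonneg fun n _ => mul_nonneg (Real.sqrt_nonneg _) (Real.sqrt_nonneg _)
    calc ∑ n ∈ Finset.range N, Real.sqrt (a n) * Real.sqrt (b n)
        = Real.sqrt ((∑ n ∈ Finset.range N, Real.sqrt (a n) * Real.sqrt (b n)) ^ 2) :=
          (Real.sqrt_sq hnn).symm
      _ ≤ Real.sqrt ((∑ n ∈ Finset.range N, a n) * (∑ n ∈ Finset.range N, b n)) :=
          Real.sqrt_le_sqrt hcs
      _ = _ := Real.sqrt_mul (Finset.sum_nonneg fun n _ => ha0 n) _
  calc (N : ℝ)⁻¹ * ∑ n ∈ Finset.range N, t n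
      ≤ (N : ℝ)⁻¹ * (Real.sqrt (∑ n ∈ Finset.range N, a n)
        * Real.sqrt (∑ n ∈ Finset.range N, b n)) :=
        mul_le_mul_of_nonneg_left (step1.trans step2) hNinv
    _ = Real.sqrt ((N : ℝ)⁻¹ * ∑ n ∈ Finset.range N, a n)
        * Real.sqrt ((N : ℝ)⁻¹ * ∑ n ∈ Finset.range N, b n) := by
        rw [Real.sqrt_mul hNinv, Real.sqrt_mul hNinv, mul_mul_mul_comm,
          Real.mul_self_sqrt hNinv]

/-! ### bounded measurable functions -/

def MB {W : Type*} [MeasurableSpace W] (φ : W → ℝ) : Prop :=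
  Measurable φ ∧ ∃ C, ∀ x, |φ x| ≤ C

theorem MB.mul {W : Type*} [MeasurableSpace W] {φ ψ : W → ℝ} (h1 : MB φ) (h2 : MB ψ) :
    MB (fun x => φ x * ψ x) := by
  obtain ⟨hm1, C, hC⟩ := h1
  obtain ⟨hm2, D, hD⟩ := h2
  refine ⟨hm1.mul hm2, max C 0 * max D 0, fun x => ?_⟩
  rw [abs_mul]
  exact mul_le_mul ((hC x).trans (le_max_left _ _)) ((hD x).trans (le_max_left _ _))
    (abs_nonneg _) (le_max_right _ _)

theorem MB.comp {W W' : Type*} [MeasurableSpace W] [MeasurableSpace W'] {φ : W → ℝ}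
    (h : MB φ) {S : W' → W} (hS : Measurable S) : MB (fun x => φ (S x)) :=
  ⟨h.1.comp hS, h.2.choose, fun x => h.2.choose_spec (S x)⟩

theorem MB.const {W : Type*} [MeasurableSpace W] (c : ℝ) : MB (fun _ : W => c) :=
  ⟨measurable_const, |c|, fun _ => le_rfl⟩

/-! ### combinators on boxes -/

section HKCombinators

variable {X : Type*} [MeasurableSpace X]

/-- tensor of two functions. -/
def tens {k : ℕ} (φ ψ : HKBox X k → ℝ) : HKBox X (k+1) → ℝ := fun p => φ p.1 * ψ p.2

/-- iterated doubling. -/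
def Dk {m : ℕ} : ∀ k, (HKBox X m → ℝ) → HKBox X (m+k) → ℝ
  | 0 => fun φ => φ
  | (k+1) => fun φ => tens (Dk k φ) (Dk k φ)

/-- selector product. -/
def selB (f g : X → ℝ) : ∀ j, HKBox Bool j → HKBox X j → ℝ
  | 0 => fun b => bif b then f else g
  | (j+1) => fun c p => selB f g j c.1 p.1 * selB f g j c.2 p.2

/-- weights. -/
def wt (u v : ℝ) : ∀ j, HKBox Bool j → ℝ
  | 0 => fun b => bif b then u else v
  | (j+1) => fun c => wt u v j c.1 * wt u v j c.2

/-- sum over all boolean boxes. -/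
def sumB : ∀ j, (HKBox Bool j → ℝ) → ℝ
  | 0 => fun w => w true + w false
  | (j+1) => fun w => sumB j fun a => sumB j fun b => w (a, b)

/-- index cast. -/
def castB {M M' : ℕ} (h : M = M') (φ : HKBox X M → ℝ) : HKBox X M' → ℝ := h ▸ φ

theorem castB_rfl {M : ℕ} (h : M = M) (φ : HKBox X M → ℝ) : castB h φ = φ := by
  rw [Subsingleton.elim h rfl]; rfl

theorem castB_tens {M M' : ℕ} (h : M = M') (h2 : M + 1 = M' + 1) (u v : HKBox X M → ℝ) :
    castB h2 (tens u v) = tens (castB h u) (castB h v) := by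
  subst h; rw [castB_rfl, castB_rfl, castB_rfl]

theorem Dk_tens_self {m : ℕ} (A : HKBox X m → ℝ) :
    ∀ k (h : (m+1)+k = m+(k+1)), castB h (Dk k (tens A A)) = Dk (k+1) A
  | 0, h => by rw [castB_rfl]; rfl
  | (k+1), h => by
    show castB h (tens (Dk k (tens A A)) (Dk k (tens A A))) = _
    rw [castB_tens (Nat.succ_injective h) h, Dk_tens_self A k (Nat.succ_injective h)]
    rfl

theorem Dk_zero_prodFun (f : X → ℝ) :
    ∀ k (h : 0 + k = k), castB h (Dk k f) = HKBox.prodFun f k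
  | 0, h => by rw [castB_rfl]; rfl
  | (k+1), h => by
    show castB h (tens (Dk k f) (Dk k f)) = _
    rw [castB_tens (Nat.succ_injective h) h, Dk_zero_prodFun f k (Nat.succ_injective h)]
    rfl

theorem measurable_mapT {T : X → X} (hT : Measurable T) :
    ∀ k, Measurable (HKBox.map T k)
  | 0 => hT
  | (k+1) => Measurable.prodMk
      ((measurable_mapT hT k).comp measurable_fst)
      ((measurable_mapT hT k).comp measurable_snd)

theorem mapT_iterate {T : X → X} (k n : ℕ) (p : HKBox X (k+1)) :
    (HKBox.map T (k+1))^[n] p = ((HKBox.map T k)^[n] p.1, (HKBox.map T k)^[n] p.2) := by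
  induction n generalizing p with
  | zero => rfl
  | succ n ih =>
    rw [Function.iterate_succ_apply, Function.iterate_succ_apply, Function.iterate_succ_apply]
    exact ih _

theorem MB.tens {k : ℕ} {φ ψ : HKBox X k → ℝ} (h1 : MB φ) (h2 : MB ψ) : MB (tens φ ψ) :=
  MB.mul (h1.comp measurable_fst) (h2.comp measurable_snd)

theorem MB.Dk {m : ℕ} {φ : HKBox X m → ℝ} (h : MB φ) : ∀ k, MB (Dk k φ)
  | 0 => h
  | (k+1) => (h.Dk k).tens (h.Dk k)

theorem MB.prodFun {f : X → ℝ} (h : MB f) : ∀ k, MB (HKBox.prodFun f k)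
  | 0 => h
  | (k+1) => MB.mul ((h.prodFun k).comp measurable_fst) ((h.prodFun k).comp measurable_snd)

theorem MB.selB {f g : X → ℝ} (hf : MB f) (hg : MB g) :
    ∀ j (c : HKBox Bool j), MB (selB f g j c)
  | 0, c => by cases c <;> [exact hg; exact hf]
  | (j+1), c => MB.mul (((MB.selB hf hg j c.1)).comp measurable_fst)
      (((MB.selB hf hg j c.2)).comp measurable_snd)

theorem tens_comp_mul {m : ℕ} {T : X → X} (α β : HKBox X m → ℝ) (n : ℕ)
    (x : HKBox X (m+1)) :
    tens α β ((HKBox.map T (m+1))^[n] x) * tens α β x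
      = tens (fun z => α ((HKBox.map T m)^[n] z) * α z)
          (fun z => β ((HKBox.map T m)^[n] z) * β z) x := by
  rw [mapT_iterate]
  show α _ * β _ * (α x.1 * β x.2) = α _ * α x.1 * (β _ * β x.2)
  ring

theorem Dk_comp_mul {T : X → X} :
    ∀ (k : ℕ) {m' : ℕ} (α : HKBox X m' → ℝ) (n : ℕ) (y : HKBox X (m'+k)),
    Dk k α ((HKBox.map T (m'+k))^[n] y) * Dk k α y
      = Dk k (fun z => α ((HKBox.map T m')^[n] z) * α z) y
  | 0, m', α, n, y => rfl
  | (k+1), m', α, n, y => by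
    have h1 := tens_comp_mul (T := T) (m := m'+k) (Dk k α) (Dk k α) n y
    have hh : (fun z => Dk k α ((HKBox.map T (m'+k))^[n] z) * Dk k α z)
        = Dk (m := m') k (fun z => α ((HKBox.map T m')^[n] z) * α z) := by
      funext z; exact Dk_comp_mul k α n z
    rw [hh] at h1
    exact h1

/-! ### sumB lemmas -/

theorem sumB_congr : ∀ j {F G : HKBox Bool j → ℝ}, (∀ c, F c = G c) → sumB j F = sumB j G
  | 0, F, G, h => by show F true + F false = _; rw [h true, h false]; rfl
  | (j+1), F, G, h => by
    show sumB j (fun a => sumB j fun b => F (a, b)) = sumB j (fun a => sumB j fun b => G (a, b))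
    exact sumB_congr j fun a => sumB_congr j fun b => h (a, b)

theorem sumB_le : ∀ j {F G : HKBox Bool j → ℝ}, (∀ c, F c ≤ G c) → sumB j F ≤ sumB j G
  | 0, F, G, h => add_le_add (h true) (h false)
  | (j+1), F, G, h => sumB_le j fun a => sumB_le j fun b => h (a, b)

theorem sumB_mul_right : ∀ j (F : HKBox Bool j → ℝ) (r : ℝ),
    sumB j (fun c => F c * r) = sumB j F * r
  | 0, F, r => (add_mul _ _ _).symm
  | (j+1), F, r => by
    show sumB j (fun a => sumB j fun b => F (a, b) * r) = _
    rw [show (fun a => sumB j fun b => F (a, b) * r)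
        = fun a => (sumB j fun b => F (a, b)) * r from funext fun a => sumB_mul_right j _ r]
    exact sumB_mul_right j _ r

theorem sumB_mul_left : ∀ j (F : HKBox Bool j → ℝ) (r : ℝ),
    sumB j (fun c => r * F c) = r * sumB j F
  | j, F, r => by
    have h1 : ∀ c, r * F c = F c * r := fun c => mul_comm _ _
    rw [sumB_congr j h1, sumB_mul_right j F r, mul_comm]

theorem sumB_mul : ∀ j (F G : HKBox Bool j → ℝ),
    sumB j F * sumB j G = sumB j (fun a => sumB j fun b => F a * G b)
  | j, F, G => by
    rw [show (fun a => sumB j fun b => F a * G b) = fun a => F a * sumB j G from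
      funext fun a => sumB_mul_left j G (F a)]
    exact (sumB_mul_right j F (sumB j G)).symm

theorem prodFun_add (f g : X → ℝ) :
    ∀ j (x : HKBox X j), HKBox.prodFun (f + g) j x = sumB j (fun c => selB f g j c x)
  | 0, x => by
    show f x + g x = (bif true then f else g) x + (bif false then f else g) x
    rfl
  | (j+1), x => by
    show HKBox.prodFun (f+g) j x.1 * HKBox.prodFun (f+g) j x.2 = _
    rw [prodFun_add f g j x.1, prodFun_add f g j x.2, sumB_mul]
    rfl

theorem sumB_wt (u v : ℝ) : ∀ j, sumB j (wt u v j) = (u + v) ^ (2 ^ j)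
  | 0 => by show u + v = (u+v)^(2^0); norm_num
  | (j+1) => by
    show sumB j (fun a => sumB j fun b => wt u v j a * wt u v j b) = _
    rw [← sumB_mul, sumB_wt u v j, ← pow_add]
    congr 1
    rw [pow_succ]
    omega

theorem wt_nonneg {u v : ℝ} (hu : 0 ≤ u) (hv : 0 ≤ v) :
    ∀ j (c : HKBox Bool j), 0 ≤ wt u v j c
  | 0, c => by cases c <;> [exact hv; exact hu]
  | (j+1), c => mul_nonneg (wt_nonneg hu hv j c.1) (wt_nonneg hu hv j c.2)

theorem sqrt_wt {u v : ℝ} (hu : 0 ≤ u) (hv : 0 ≤ v) :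
    ∀ j (c : HKBox Bool j), Real.sqrt (wt u v j c) = wt (Real.sqrt u) (Real.sqrt v) j c
  | 0, c => by cases c <;> rfl
  | (j+1), c => by
    show Real.sqrt (wt u v j c.1 * wt u v j c.2) = _
    rw [Real.sqrt_mul (wt_nonneg hu hv j c.1), sqrt_wt hu hv j c.1, sqrt_wt hu hv j c.2]
    rfl

theorem wt_le_wt {u v u' v' : ℝ} (hu' : 0 ≤ u) (hv' : 0 ≤ v) (hu : u ≤ u') (hv : v ≤ v') :
    ∀ j (c : HKBox Bool j), wt u v j c ≤ wt u' v' j c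
  | 0, c => by cases c <;> [exact hv; exact hu]
  | (j+1), c => mul_le_mul (wt_le_wt hu' hv' hu hv j c.1) (wt_le_wt hu' hv' hu hv j c.2)
      (wt_nonneg hu' hv' j c.2) ((wt_nonneg hu' hv' j c.1).trans (wt_le_wt hu' hv' hu hv j c.1))

theorem integrable_sumB {W : Type*} [MeasurableSpace W] {ρ : Measure W} :
    ∀ j (Φ : HKBox Bool j → W → ℝ), (∀ c, Integrable (Φ c) ρ) →
      Integrable (fun x => sumB j (fun c => Φ c x)) ρ
  | 0, Φ, h => (h true).add (h false)
  | (j+1), Φ, h =>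
    integrable_sumB j (fun a => fun x => sumB j fun b => Φ (a, b) x)
      (fun a => integrable_sumB j _ fun b => h (a, b))

theorem integral_sumB {W : Type*} [MeasurableSpace W] {ρ : Measure W} :
    ∀ j (Φ : HKBox Bool j → W → ℝ), (∀ c, Integrable (Φ c) ρ) →
      ∫ x, sumB j (fun c => Φ c x) ∂ρ = sumB j (fun c => ∫ x, Φ c x ∂ρ)
  | 0, Φ, h => integral_add (h true) (h false)
  | (j+1), Φ, h => by
    show ∫ x, sumB j (fun a => sumB j fun b => Φ (a, b) x) ∂ρ = _
    rw [integral_sumB j (fun a => fun x => sumB j fun b => Φ (a, b) x)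
      (fun a => integrable_sumB j _ fun b => h (a, b))]
    exact sumB_congr j fun a => integral_sumB j _ fun b => h (a, b)

theorem prodFun_smul (c : ℝ) (f : X → ℝ) : ∀ k (x : HKBox X k),
    HKBox.prodFun (fun y => c * f y) k x = c ^ (2^k) * HKBox.prodFun f k x
  | 0, x => by show c * f x = c ^ (2^0) * f x; norm_num
  | (k+1), x => by
    show HKBox.prodFun _ k x.1 * HKBox.prodFun _ k x.2 = _
    rw [prodFun_smul c f k x.1, prodFun_smul c f k x.2]
    show (c ^ 2^k * _) * (c ^ 2^k * _) = c ^ (2^(k+1)) * (_ * _)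
    rw [mul_mul_mul_comm, ← pow_add]
    congr 2
    rw [pow_succ, mul_two]

end HKCombinators

/-! ### level facts -/

section Core

variable {X : Type*} [MeasurableSpace X] {μ : Measure X} [IsProbabilityMeasure μ]
  {T : X → X} {ν : ∀ k, Measure (HKBox X k)}

theorem level_facts (hT : MeasurePreserving T μ μ) (hν : IsHKSeq μ T ν) :
    ∀ k, IsProbabilityMeasure (ν k) ∧ MeasurePreserving (HKBox.map T k) (ν k) (ν k) := by
  intro k
  induction k with
  | zero =>
    rw [hν.1]
    exact ⟨inferInstanceAs (IsProbabilityMeasure μ), hT⟩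
  | succ k ih =>
    haveI hp := ih.1
    have hmp := ih.2
    haveI := sf_trim (ν k) (HKBox.map T k)
    -- probability
    have hone := hν.2 k (fun _ => 1) (fun _ => 1) measurable_const measurable_const
      ⟨1, fun _ => by norm_num⟩ ⟨1, fun _ => by norm_num⟩
    have hc := condExp_const (m := invSigma (HKBox.map T k)) (μ := ν k) (invSigma_le _) (1:ℝ)
    rw [hc] at hone
    simp only [mul_one, integral_const, smul_eq_mul, measure_univ, ENNReal.toReal_one,
      one_mul, probReal_univ] at hone
    have hprob : IsProbabilityMeasure (ν (k+1)) := by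
      constructor
      rw [← ENNReal.toReal_eq_one_iff]; exact hone
    refine ⟨hprob, ?_⟩
    -- measure preserving
    haveI := hprob
    have hmeas := measurable_mapT hT.measurable (k+1)
    refine ⟨hmeas, ?_⟩
    have hIV : ∀ {s t : Set (HKBox X k)}, MeasurableSet s → MeasurableSet t →
        ((ν (k+1)) (s ×ˢ t)).toReal =
        ∫ x, ((ν k)[s.indicator (fun _ => (1:ℝ))|invSigma (HKBox.map T k)]) x *
          ((ν k)[t.indicator (fun _ => (1:ℝ))|invSigma (HKBox.map T k)]) x ∂ν k := by
      intro s t hs ht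
      have h1 := hν.2 k (s.indicator (fun _ => 1)) (t.indicator (fun _ => 1))
        (measurable_const.indicator hs) (measurable_const.indicator ht)
        ⟨1, fun x => by by_cases h : x ∈ s <;> simp [h]⟩
        ⟨1, fun x => by by_cases h : x ∈ t <;> simp [h]⟩
      have h2 : ∀ p : HKBox X (k+1), s.indicator (fun _ => (1:ℝ)) p.1 *
          t.indicator (fun _ => (1:ℝ)) p.2 = (s ×ˢ t).indicator (1 : HKBox X (k+1) → ℝ) p := by
        intro p
        by_cases ha : p.1 ∈ s <;> by_cases hb : p.2 ∈ t <;>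
          simp [Set.indicator, ha, hb]
        · exact ⟨ha, hb⟩
        · exact fun h => hb h.2
        · exact fun h => ha h.1
        · exact fun h => ha h.1
      have h3 : ∫ p, s.indicator (fun _ => (1:ℝ)) p.1 * t.indicator (fun _ => (1:ℝ)) p.2
            ∂ν (k+1) = ((ν (k+1)) (s ×ˢ t)).toReal := by
        rw [integral_congr_ae (Eventually.of_forall h2)]
        exact integral_indicator_one (hs.prod ht)
      rw [← h1, h3]
    haveI : IsProbabilityMeasure ((ν (k+1)).map (HKBox.map T (k+1))) :=
      Measure.isProbabilityMeasure_map hmeas.aemeasurable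
    refine ext_of_generate_finite _ generateFrom_prod.symm isPiSystem_prod (fun u hu => ?_) ?_
    · obtain ⟨s, hs, t, ht, rfl⟩ := hu
      simp only [Set.mem_setOf_eq] at hs ht
      rw [Measure.map_apply hmeas (hs.prod ht)]
      have hpre : HKBox.map T (k+1) ⁻¹' (s ×ˢ t) =
          (HKBox.map T k ⁻¹' s) ×ˢ (HKBox.map T k ⁻¹' t) := rfl
      rw [hpre]
      have he1 : ∀ {s : Set (HKBox X k)}, MeasurableSet s →
          ((ν k)[(HKBox.map T k ⁻¹' s).indicator (fun _ => (1:ℝ))|invSigma (HKBox.map T k)])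
          =ᵐ[ν k] ((ν k)[s.indicator (fun _ => (1:ℝ))|invSigma (HKBox.map T k)]) := by
        intro s hs
        have heq : (HKBox.map T k ⁻¹' s).indicator (fun _ => (1:ℝ))
            = fun x => s.indicator (fun _ => (1:ℝ)) (HKBox.map T k x) := by
          funext x
          by_cases h : HKBox.map T k x ∈ s <;> simp [Set.indicator_apply, h]
        rw [heq]
        exact condexp_comp_ae hmp (measurable_const.indicator hs)
          (C := 1) (fun x => by by_cases h : x ∈ s <;> simp [h])
      have hfin1 : (ν (k+1)) ((HKBox.map T k ⁻¹' s) ×ˢ (HKBox.map T k ⁻¹' t)) ≠ ⊤ :=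
        measure_ne_top _ _
      have hfin2 : (ν (k+1)) (s ×ˢ t) ≠ ⊤ := measure_ne_top _ _
      rw [← ENNReal.toReal_eq_toReal_iff' hfin1 hfin2,
        hIV (hmp.measurable hs) (hmp.measurable ht), hIV hs ht]
      exact integral_congr_ae ((he1 hs).mul (he1 ht))
    · simp only [Measure.map_apply hmeas MeasurableSet.univ, Set.preimage_univ]
  
/-! ### the Q machinery -/

variable (ν) in
noncomputable def QI (k : ℕ) (φ : HKBox X k → ℝ) : ℝ :=
  ∫ p, φ p.1 * φ p.2 ∂(ν (k+1))

variable (ν) in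
noncomputable def Intg (k : ℕ) (h : X → ℝ) : ℝ :=
  ∫ x, HKBox.prodFun h k x ∂(ν k)

theorem QI_cast {M M' : ℕ} (h : M = M') (φ : HKBox X M → ℝ) :
    QI ν M' (castB h φ) = QI ν M φ := by
  subst h
  rw [castB_rfl]

theorem QI_eq (hν : IsHKSeq μ T ν) (k : ℕ) {φ : HKBox X k → ℝ} (h : MB φ) :
    QI ν k φ = ∫ x, ((ν k)[φ|invSigma (HKBox.map T k)]) x *
      ((ν k)[φ|invSigma (HKBox.map T k)]) x ∂ν k :=
  hν.2 k φ φ h.1 h.1 h.2 h.2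

theorem QI_nonneg (hν : IsHKSeq μ T ν) (k : ℕ) {φ : HKBox X k → ℝ} (h : MB φ) :
    0 ≤ QI ν k φ := by
  rw [QI_eq hν k h]
  exact integral_nonneg fun x => mul_self_nonneg _

theorem B_le (hT : MeasurePreserving T μ μ) (hν : IsHKSeq μ T ν) (k : ℕ)
    {φ ψ : HKBox X k → ℝ} (hφ : MB φ) (hψ : MB ψ) :
    ∫ p, φ p.1 * ψ p.2 ∂(ν (k+1)) ≤ Real.sqrt (QI ν k φ) * Real.sqrt (QI ν k ψ) := by
  haveI := (level_facts hT hν k).1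
  obtain ⟨C, hC⟩ := hφ.2
  obtain ⟨D, hD⟩ := hψ.2
  rw [hν.2 k φ ψ hφ.1 hψ.1 ⟨C, hC⟩ ⟨D, hD⟩]
  have h1 := integral_mul_le (memLp2_condexp (ν := ν k) (HKBox.map T k) hφ.1 hC)
    (memLp2_condexp (ν := ν k) (HKBox.map T k) hψ.1 hD)
  rw [QI_eq hν k hφ, QI_eq hν k hψ]
  exact h1

theorem vnQ (hT : MeasurePreserving T μ μ) (hν : IsHKSeq μ T ν) (k : ℕ)
    {φ : HKBox X k → ℝ} (h : MB φ) :
    Tendsto (fun N : ℕ => (N : ℝ)⁻¹ * ∑ n ∈ Finset.range N,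
        ∫ x, φ ((HKBox.map T k)^[n] x) * φ x ∂ν k)
      atTop (𝓝 (QI ν k φ)) := by
  haveI := (level_facts hT hν k).1
  obtain ⟨C, hC⟩ := h.2
  have := vn_tendsto (level_facts hT hν k).2 h.1 hC
  rwa [← QI_eq hν k h] at this

theorem Intg_succ (k : ℕ) (h : X → ℝ) : Intg ν (k+1) h = QI ν k (HKBox.prodFun h k) := rfl

theorem Intg_nonneg (hν : IsHKSeq μ T ν) (k : ℕ) {f : X → ℝ} (hf : MB f) :
    0 ≤ Intg ν (k+1) f := by
  rw [Intg_succ]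
  exact QI_nonneg hν k (hf.prodFun k)

/-- The term identity for diagonal tensors. -/
theorem diag_term (m : ℕ) (α : HKBox X m → ℝ) (n : ℕ) :
    ∫ x, tens α α ((HKBox.map T (m+1))^[n] x) * tens α α x ∂ν (m+1)
      = QI ν m (fun z => α ((HKBox.map T m)^[n] z) * α z) :=
  integral_congr_ae (Eventually.of_forall fun x => tens_comp_mul α α n x)

theorem Dk_term (k m : ℕ) (α β : HKBox X m → ℝ) (n : ℕ) :
    (fun y => Dk k (tens α β) ((HKBox.map T (m+1+k))^[n] y) * Dk k (tens α β) y)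
      = Dk k (tens (fun z => α ((HKBox.map T m)^[n] z) * α z)
              (fun z => β ((HKBox.map T m)^[n] z) * β z)) := by
  funext y
  rw [Dk_comp_mul k (tens α β) n y]
  have h : (fun z => tens α β ((HKBox.map T (m+1))^[n] z) * tens α β z)
      = tens (fun z => α ((HKBox.map T m)^[n] z) * α z)
          (fun z => β ((HKBox.map T m)^[n] z) * β z) :=
    funext fun w => tens_comp_mul α β n w
  rw [h]

theorem MB.iter_mul {m : ℕ} (hT : Measurable T) {α : HKBox X m → ℝ} (h : MB α) (n : ℕ) :
    MB (fun z => α ((HKBox.map T m)^[n] z) * α z) :=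
  (h.comp ((measurable_mapT hT m).iterate n)).mul h

/-- The main Cauchy-Schwarz induction. -/
theorem claim (hT : MeasurePreserving T μ μ) (hν : IsHKSeq μ T ν) :
    ∀ (k m : ℕ) (φ ψ : HKBox X m → ℝ), MB φ → MB ψ →
    QI ν (m+1+k) (Dk k (tens φ ψ)) ≤
      Real.sqrt (QI ν (m+1+k) (Dk k (tens φ φ))) *
        Real.sqrt (QI ν (m+1+k) (Dk k (tens ψ ψ))) := by
  intro k
  induction k with
  | zero =>
    intro m φ ψ hφ hψ
    refine cesaro_le
      (t := fun n => ∫ x, tens φ ψ ((HKBox.map T (m+1))^[n] x) * tens φ ψ x ∂ν (m+1))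
      (a := fun n => ∫ x, tens φ φ ((HKBox.map T (m+1))^[n] x) * tens φ φ x ∂ν (m+1))
      (b := fun n => ∫ x, tens ψ ψ ((HKBox.map T (m+1))^[n] x) * tens ψ ψ x ∂ν (m+1))
      (fun n => ?_) (fun n => ?_) (fun n => ?_)
      (vnQ hT hν (m+1) (hφ.tens hψ)) (vnQ hT hν (m+1) (hφ.tens hφ))
      (vnQ hT hν (m+1) (hψ.tens hψ))
    · -- term bound
      rw [diag_term m φ n, diag_term m ψ n]
      have h1 : ∫ x, tens φ ψ ((HKBox.map T (m+1))^[n] x) * tens φ ψ x ∂ν (m+1)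
          = ∫ p, (fun z => φ ((HKBox.map T m)^[n] z) * φ z) p.1 *
              (fun z => ψ ((HKBox.map T m)^[n] z) * ψ z) p.2 ∂ν (m+1) :=
        integral_congr_ae (Eventually.of_forall fun x => tens_comp_mul φ ψ n x)
      rw [h1]
      exact B_le hT hν m (hφ.iter_mul hT.measurable n) (hψ.iter_mul hT.measurable n)
    · rw [diag_term m φ n]
      exact QI_nonneg hν m (hφ.iter_mul hT.measurable n)
    · rw [diag_term m ψ n]
      exact QI_nonneg hν m (hψ.iter_mul hT.measurable n)
  | succ k ih =>
    intro m φ ψ hφ hψ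
    have hφψ := (hφ.tens hψ).Dk k
    have hφφ := (hφ.tens hφ).Dk k
    have hψψ := (hψ.tens hψ).Dk k
    refine cesaro_le
      (t := fun n => ∫ x, tens (Dk k (tens φ ψ)) (Dk k (tens φ ψ))
          ((HKBox.map T (m+1+k+1))^[n] x) *
          tens (Dk k (tens φ ψ)) (Dk k (tens φ ψ)) x ∂ν (m+1+k+1))
      (a := fun n => ∫ x, tens (Dk k (tens φ φ)) (Dk k (tens φ φ))
          ((HKBox.map T (m+1+k+1))^[n] x) *
          tens (Dk k (tens φ φ)) (Dk k (tens φ φ)) x ∂ν (m+1+k+1))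
      (b := fun n => ∫ x, tens (Dk k (tens ψ ψ)) (Dk k (tens ψ ψ))
          ((HKBox.map T (m+1+k+1))^[n] x) *
          tens (Dk k (tens ψ ψ)) (Dk k (tens ψ ψ)) x ∂ν (m+1+k+1))
      (fun n => ?_) (fun n => ?_) (fun n => ?_)
      (vnQ hT hν (m+1+k+1) (hφψ.tens hφψ)) (vnQ hT hν (m+1+k+1) (hφφ.tens hφφ))
      (vnQ hT hν (m+1+k+1) (hψψ.tens hψψ))
    · rw [diag_term (m+1+k) (Dk k (tens φ ψ)) n, diag_term (m+1+k) (Dk k (tens φ φ)) n,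
        diag_term (m+1+k) (Dk k (tens ψ ψ)) n,
        Dk_term k m φ ψ n, Dk_term k m φ φ n, Dk_term k m ψ ψ n]
      exact ih m _ _ (hφ.iter_mul hT.measurable n) (hψ.iter_mul hT.measurable n)
    · rw [diag_term (m+1+k) (Dk k (tens φ φ)) n, Dk_term k m φ φ n]
      exact QI_nonneg hν (m+1+k)
        (((hφ.iter_mul hT.measurable n).tens (hφ.iter_mul hT.measurable n)).Dk k)
    · rw [diag_term (m+1+k) (Dk k (tens ψ ψ)) n, Dk_term k m ψ ψ n]
      exact QI_nonneg hν (m+1+k)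
        (((hψ.iter_mul hT.measurable n).tens (hψ.iter_mul hT.measurable n)).Dk k)

/-- The symmetrization bound. -/
theorem sym (hT : MeasurePreserving T μ μ) (hν : IsHKSeq μ T ν)
    (f g : X → ℝ) (hf : MB f) (hg : MB g) :
    ∀ (j k : ℕ) (c : HKBox Bool j),
      QI ν (j+k) (Dk k (selB f g j c)) ≤
        wt ((Intg ν (j+k+1) f) ^ (((2:ℝ)^j)⁻¹))
           ((Intg ν (j+k+1) g) ^ (((2:ℝ)^j)⁻¹)) j c := by
  intro j
  induction j with
  | zero =>
    intro k c
    have key : ∀ h : X → ℝ, QI ν (0+k) (Dk k h) = Intg ν (0+k+1) h := by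
      intro h
      have h1 := QI_cast (ν := ν) (Nat.zero_add k) (Dk k h)
      rw [Dk_zero_prodFun h k (Nat.zero_add k)] at h1
      rw [← Intg_succ] at h1
      rw [show (0:ℕ)+k+1 = k+1 by omega]
      exact h1.symm
    have hexp : ∀ u : ℝ, u ^ (((2:ℝ)^(0:ℕ))⁻¹) = u := by
      intro u
      norm_num
    cases c with
    | true =>
      rw [show selB f g 0 true = f from rfl, key f]
      rw [show wt ((Intg ν (0+k+1) f) ^ (((2:ℝ)^(0:ℕ))⁻¹))
          ((Intg ν (0+k+1) g) ^ (((2:ℝ)^(0:ℕ))⁻¹)) 0 true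
          = (Intg ν (0+k+1) f) ^ (((2:ℝ)^(0:ℕ))⁻¹) from rfl, hexp]
    | false =>
      rw [show selB f g 0 false = g from rfl, key g]
      rw [show wt ((Intg ν (0+k+1) f) ^ (((2:ℝ)^(0:ℕ))⁻¹))
          ((Intg ν (0+k+1) g) ^ (((2:ℝ)^(0:ℕ))⁻¹)) 0 false
          = (Intg ν (0+k+1) g) ^ (((2:ℝ)^(0:ℕ))⁻¹) from rfl, hexp]
  | succ j ihj =>
    intro k c
    obtain ⟨c₁, c₂⟩ := c
    have hA := MB.selB hf hg j c₁
    have hB := MB.selB hf hg j c₂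
    have h1 := claim hT hν k j (selB f g j c₁) (selB f g j c₂) hA hB
    have hcast : ∀ c' : HKBox Bool j,
        QI ν (j+1+k) (Dk k (tens (selB f g j c') (selB f g j c')))
          = QI ν (j+(k+1)) (Dk (k+1) (selB f g j c')) := by
      intro c'
      rw [← Dk_tens_self (selB f g j c') k (show (j+1)+k = j+(k+1) by omega),
        QI_cast]
    -- the induction hypothesis at deeper doubling
    have h2 := ihj (k+1) c₁
    have h3 := ihj (k+1) c₂
    rw [show j+(k+1)+1 = j+1+k+1 by omega] at h2 h3
    -- nonnegativity of the weight entries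
    have hIf : 0 ≤ Intg ν (j+1+k+1) f := Intg_nonneg hν _ hf
    have hIg : 0 ≤ Intg ν (j+1+k+1) g := Intg_nonneg hν _ hg
    have huf : 0 ≤ (Intg ν (j+1+k+1) f) ^ (((2:ℝ)^j)⁻¹) := Real.rpow_nonneg hIf _
    have hug : 0 ≤ (Intg ν (j+1+k+1) g) ^ (((2:ℝ)^j)⁻¹) := Real.rpow_nonneg hIg _
    have hsq : ∀ (u : ℝ), 0 ≤ u →
        Real.sqrt (u ^ (((2:ℝ)^j)⁻¹)) = u ^ (((2:ℝ)^(j+1))⁻¹) := by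
      intro u hu
      rw [Real.sqrt_eq_rpow, ← Real.rpow_mul hu]
      congr 1
      rw [pow_succ]
      field_simp
    calc QI ν (j+1+k) (Dk k (selB f g (j+1) (c₁, c₂)))
        ≤ Real.sqrt (QI ν (j+1+k) (Dk k (tens (selB f g j c₁) (selB f g j c₁)))) *
          Real.sqrt (QI ν (j+1+k) (Dk k (tens (selB f g j c₂) (selB f g j c₂)))) := h1
      _ = Real.sqrt (QI ν (j+(k+1)) (Dk (k+1) (selB f g j c₁))) *
          Real.sqrt (QI ν (j+(k+1)) (Dk (k+1) (selB f g j c₂))) := by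
          rw [hcast c₁, hcast c₂]
      _ ≤ Real.sqrt (wt ((Intg ν (j+1+k+1) f) ^ (((2:ℝ)^j)⁻¹))
            ((Intg ν (j+1+k+1) g) ^ (((2:ℝ)^j)⁻¹)) j c₁) *
          Real.sqrt (wt ((Intg ν (j+1+k+1) f) ^ (((2:ℝ)^j)⁻¹))
            ((Intg ν (j+1+k+1) g) ^ (((2:ℝ)^j)⁻¹)) j c₂) :=
          mul_le_mul (Real.sqrt_le_sqrt h2) (Real.sqrt_le_sqrt h3)
            (Real.sqrt_nonneg _) (Real.sqrt_nonneg _)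
      _ = wt ((Intg ν (j+1+k+1) f) ^ (((2:ℝ)^(j+1))⁻¹))
            ((Intg ν (j+1+k+1) g) ^ (((2:ℝ)^(j+1))⁻¹)) (j+1) (c₁, c₂) := by
          rw [sqrt_wt huf hug j c₁, sqrt_wt huf hug j c₂, hsq _ hIf, hsq _ hIg]
          rfl

/-- Gowers-Cauchy-Schwarz for selectors. -/
theorem gcs (hT : MeasurePreserving T μ μ) (hν : IsHKSeq μ T ν)
    {f g : X → ℝ} (hf : MB f) (hg : MB g) (j : ℕ) (c : HKBox Bool (j+1)) :
    ∫ x, selB f g (j+1) c x ∂ν (j+1) ≤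
      wt (HKseminorm ν (j+1) f) (HKseminorm ν (j+1) g) (j+1) c := by
  obtain ⟨c₁, c₂⟩ := c
  have hA := MB.selB hf hg j c₁
  have hB := MB.selB hf hg j c₂
  have hIf : 0 ≤ Intg ν (j+1) f := Intg_nonneg hν _ hf
  have hIg : 0 ≤ Intg ν (j+1) g := Intg_nonneg hν _ hg
  have huf : 0 ≤ (Intg ν (j+1) f) ^ (((2:ℝ)^j)⁻¹) := Real.rpow_nonneg hIf _
  have hug : 0 ≤ (Intg ν (j+1) g) ^ (((2:ℝ)^j)⁻¹) := Real.rpow_nonneg hIg _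
  have hsq : ∀ (u : ℝ), 0 ≤ u →
      Real.sqrt (u ^ (((2:ℝ)^j)⁻¹)) = u ^ (((2:ℝ)^(j+1))⁻¹) := by
    intro u hu
    rw [Real.sqrt_eq_rpow, ← Real.rpow_mul hu]
    congr 1
    rw [pow_succ]
    field_simp
  have h2 := sym hT hν f g hf hg j 0 c₁
  have h3 := sym hT hν f g hf hg j 0 c₂
  calc ∫ x, selB f g (j+1) (c₁, c₂) x ∂ν (j+1)
      = ∫ p, selB f g j c₁ p.1 * selB f g j c₂ p.2 ∂ν (j+1) := rfl
    _ ≤ Real.sqrt (QI ν j (selB f g j c₁)) * Real.sqrt (QI ν j (selB f g j c₂)) :=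
        B_le hT hν j hA hB
    _ ≤ Real.sqrt (wt ((Intg ν (j+1) f) ^ (((2:ℝ)^j)⁻¹))
          ((Intg ν (j+1) g) ^ (((2:ℝ)^j)⁻¹)) j c₁) *
        Real.sqrt (wt ((Intg ν (j+1) f) ^ (((2:ℝ)^j)⁻¹))
          ((Intg ν (j+1) g) ^ (((2:ℝ)^j)⁻¹)) j c₂) :=
        mul_le_mul (Real.sqrt_le_sqrt h2) (Real.sqrt_le_sqrt h3)
          (Real.sqrt_nonneg _) (Real.sqrt_nonneg _)
    _ = wt (HKseminorm ν (j+1) f) (HKseminorm ν (j+1) g) (j+1) (c₁, c₂) := by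
        rw [sqrt_wt huf hug j c₁, sqrt_wt huf hug j c₂, hsq _ hIf, hsq _ hIg]
        rfl

end Core

end HKP

/-- For an ergodic system `(X, μ, T)` and every `k ≥ 1`, the quantity
`⦀f⦀_k = (∫ ∏_ε f(x_ε) dμ^{[k]})^{1/2^k}` is well-defined (the integral is nonnegative)
and is a seminorm on `L^∞(μ)` (nonnegative, absolutely homogeneous, triangle inequality);
moreover `⦀f⦀_1 = |∫ f dμ|`. -/
theorem HKseminorm_is_seminorm {X : Type*} [MeasurableSpace X]
    (μ : Measure X) [IsProbabilityMeasure μ]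
    (T T' : X → X) (hT' : Measurable T')
    (hTinv : Function.LeftInverse T' T ∧ Function.RightInverse T' T)
    (hergT : Ergodic T μ)
    (ν : ∀ k, Measure (HKBox X k)) (hν : IsHKSeq μ T ν)
    (k : ℕ) (hk : 1 ≤ k) :
    (∀ f : X → ℝ, Measurable f → (∃ C, ∀ x, |f x| ≤ C) →
        (0 ≤ ∫ x, HKBox.prodFun f k x ∂(ν k)) ∧ 0 ≤ HKseminorm ν k f) ∧
    (∀ f : X → ℝ, Measurable f → (∃ C, ∀ x, |f x| ≤ C) → ∀ c : ℝ,
        HKseminorm ν k (fun x => c * f x) = |c| * HKseminorm ν k f) ∧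
    (∀ f g : X → ℝ, Measurable f → Measurable g →
        (∃ C, ∀ x, |f x| ≤ C) → (∃ C, ∀ x, |g x| ≤ C) →
        HKseminorm ν k (f + g) ≤ HKseminorm ν k f + HKseminorm ν k g) ∧
    (∀ f : X → ℝ, Measurable f → (∃ C, ∀ x, |f x| ≤ C) →
        HKseminorm ν 1 f = |∫ x, f x ∂μ|) := by
  obtain ⟨j, rfl⟩ : ∃ j, k = j + 1 := ⟨k - 1, by omega⟩
  have hT : MeasurePreserving T μ μ := hergT.toMeasurePreserving
  have part1 : ∀ f : X → ℝ, Measurable f → (∃ C, ∀ x, |f x| ≤ C) →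
      (0 ≤ ∫ x, HKBox.prodFun f (j+1) x ∂(ν (j+1))) ∧ 0 ≤ HKseminorm ν (j+1) f := by
    intro f hm hb
    have h0 : 0 ≤ HKP.Intg ν (j+1) f := HKP.Intg_nonneg hν j ⟨hm, hb⟩
    exact ⟨h0, Real.rpow_nonneg h0 _⟩
  refine ⟨part1, ?_, ?_, ?_⟩
  · -- homogeneity
    intro f hm hb c
    have hI0 := (part1 f hm hb).1
    have heven : Even (2^(j+1)) := ⟨2^j, by rw [pow_succ, mul_two]⟩
    have h1 : ∫ x, HKBox.prodFun (fun x => c * f x) (j+1) x ∂ν (j+1)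
        = c ^ (2^(j+1)) * ∫ x, HKBox.prodFun f (j+1) x ∂ν (j+1) := by
      rw [integral_congr_ae (Filter.Eventually.of_forall fun x =>
        HKP.prodFun_smul c f (j+1) x)]
      exact integral_const_mul _ _
    show (∫ x, HKBox.prodFun (fun x => c * f x) (j+1) x ∂ν (j+1)) ^ (((2:ℝ)^(j+1))⁻¹)
      = |c| * HKseminorm ν (j+1) f
    rw [h1, ← heven.pow_abs c, Real.mul_rpow (pow_nonneg (abs_nonneg c) _) hI0]
    have h2 : ((|c| ^ (2^(j+1) : ℕ)) : ℝ) ^ (((2:ℝ)^(j+1))⁻¹) = |c| := by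
      rw [← Real.rpow_natCast |c| (2^(j+1)), ← Real.rpow_mul (abs_nonneg c)]
      rw [show ((2^(j+1) : ℕ) : ℝ) * ((2:ℝ)^(j+1))⁻¹ = 1 by
        push_cast
        rw [mul_inv_cancel₀ (by positivity)]]
      exact Real.rpow_one _
    rw [h2]
    rfl
  · -- triangle inequality
    intro f g hfm hgm hfb hgb
    have hf : HKP.MB f := ⟨hfm, hfb⟩
    have hg : HKP.MB g := ⟨hgm, hgb⟩
    have hfg : HKP.MB (f + g) := by
      obtain ⟨C, hC⟩ := hfb
      obtain ⟨D, hD⟩ := hgb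
      exact ⟨hfm.add hgm, C + D, fun x => (abs_add_le _ _).trans (add_le_add (hC x) (hD x))⟩
    set Nf := HKseminorm ν (j+1) f with hNf
    set Ng := HKseminorm ν (j+1) g with hNg
    have hNf0 : 0 ≤ Nf := (part1 f hfm hfb).2
    have hNg0 : 0 ≤ Ng := (part1 g hgm hgb).2
    have hexp : ∫ x, HKBox.prodFun (f+g) (j+1) x ∂ν (j+1) ≤ (Nf + Ng) ^ (2^(j+1)) := by
      haveI := (HKP.level_facts hT hν (j+1)).1
      calc ∫ x, HKBox.prodFun (f+g) (j+1) x ∂ν (j+1)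
          = ∫ x, HKP.sumB (j+1) (fun c => HKP.selB f g (j+1) c x) ∂ν (j+1) :=
            integral_congr_ae (Filter.Eventually.of_forall fun x =>
              HKP.prodFun_add f g (j+1) x)
        _ = HKP.sumB (j+1) (fun c => ∫ x, HKP.selB f g (j+1) c x ∂ν (j+1)) :=
            HKP.integral_sumB (j+1) _ (fun c => HKP.integrable_of_bound
              (HKP.MB.selB hf hg (j+1) c).1 (HKP.MB.selB hf hg (j+1) c).2.choose_spec)
        _ ≤ HKP.sumB (j+1) (HKP.wt Nf Ng (j+1)) :=
            HKP.sumB_le (j+1) (fun c => HKP.gcs hT hν hf hg j c)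
        _ = (Nf + Ng) ^ (2^(j+1)) := HKP.sumB_wt Nf Ng (j+1)
    have h0 : 0 ≤ ∫ x, HKBox.prodFun (f+g) (j+1) x ∂ν (j+1) := HKP.Intg_nonneg hν j hfg
    show (∫ x, HKBox.prodFun (f+g) (j+1) x ∂ν (j+1)) ^ (((2:ℝ)^(j+1))⁻¹) ≤ Nf + Ng
    calc (∫ x, HKBox.prodFun (f+g) (j+1) x ∂ν (j+1)) ^ (((2:ℝ)^(j+1))⁻¹)
        ≤ ((Nf+Ng) ^ (2^(j+1) : ℕ)) ^ (((2:ℝ)^(j+1))⁻¹) :=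
          Real.rpow_le_rpow h0 hexp (by positivity)
      _ = Nf + Ng := by
          rw [← Real.rpow_natCast (Nf+Ng) (2^(j+1)), ← Real.rpow_mul (by positivity)]
          rw [show ((2^(j+1) : ℕ) : ℝ) * ((2:ℝ)^(j+1))⁻¹ = 1 by
            push_cast
            rw [mul_inv_cancel₀ (by positivity)]]
          exact Real.rpow_one _
  · -- value at k = 1
    intro f hm hb
    obtain ⟨C, hC⟩ := hb
    have h1 := hν.2 0 f f hm hm ⟨C, hC⟩ ⟨C, hC⟩
    rw [hν.1] at h1
    have hE := HKP.ergodic_condexp hergT hm hC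
    have h2 : ∫ x : HKBox X 0, (μ[f|invSigma (HKBox.map T 0)]) x *
          (μ[f|invSigma (HKBox.map T 0)]) x ∂μ
        = (∫ x, f x ∂μ) * (∫ x, f x ∂μ) := by
      have hE' : μ[f|invSigma (HKBox.map T 0)] =ᵐ[μ] fun _ => ∫ x, f x ∂μ := hE
      have h4 := integral_congr_ae (hE'.mul hE')
      simp only [Pi.mul_apply, integral_const, measure_univ, ENNReal.toReal_one,
        smul_eq_mul, one_mul, probReal_univ] at h4
      exact h4
    replace h1 := h1.trans h2
    show (∫ x, HKBox.prodFun f 1 x ∂ν 1) ^ (((2:ℝ)^(1:ℕ))⁻¹) = |∫ x, f x ∂μ|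
    have h3 : ∫ x, HKBox.prodFun f 1 x ∂ν 1 = (∫ x, f x ∂μ) * (∫ x, f x ∂μ) := h1
    rw [h3]
    rw [show (∫ x, f x ∂μ) * (∫ x, f x ∂μ) = |∫ x, f x ∂μ| ^ (2:ℕ) from by
      rw [sq_abs]; ring]
    rw [← Real.rpow_natCast |∫ x, f x ∂μ| 2, ← Real.rpow_mul (abs_nonneg _)]
    rw [show ((2:ℕ):ℝ) * ((2:ℝ)^(1:ℕ))⁻¹ = 1 by norm_num]
    exact Real.rpow_one _
end
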